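/- arXiv:1305.4616 — 5 statements merged into one kernel-verified Lean document; each statement's English description precedes it below -/
import Mathlib

section
/- Assume that G ⊂ ℝⁿ is a uniform domain with uniformity constant C. Then there exists a constant c ≥ 1, depending only on n and C, such that for all x ∈ G one has ∂G ∩ B(x, 2·dist(x,∂G)) ⊂ ∂^vis_{x,c}G. -/
open MeasureTheory Metric Set
open scoped ENNReal NNReal Topology

noncomputable section

/-- Euclidean space `ℝⁿ`. -/
abbrev Euc (n : ℕ) := EuclideanSpace ℝ (Fin n)

/-- The `λ`-Hausdorff content of a set `E ⊆ ℝⁿ`: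
`H^λ_∞(E) = inf { Σ_i r_i^λ : E ⊆ ⋃_i B(x_i, r_i), r_i > 0 }`. -/
def hContent (n : ℕ) (lam : ℝ) (E : Set (Euc n)) : ℝ≥0∞ :=
  ⨅ (c : ℕ → Euc n × ℝ) (_ : ∀ i, 0 < (c i).2)
    (_ : E ⊆ ⋃ i, Metric.ball (c i).1 (c i).2),
    ∑' i, ENNReal.ofReal ((c i).2 ^ lam)

/-- The Riesz `(s,p)`-capacity of a set `E ⊆ ℝⁿ`:
`R_{s,p}(E) = inf { ‖f‖_p^p : f ≥ 0, I_s f ≥ 1 on E }`, where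
`I_s f (x) = ∫ f(y) |x-y|^{s-n} dy`. -/
def rieszCap (n : ℕ) (s p : ℝ) (E : Set (Euc n)) : ℝ≥0∞ :=
  ⨅ (f : Euc n → ℝ) (_ : Measurable f) (_ : ∀ x, 0 ≤ f x)
    (_ : ∀ x ∈ E, 1 ≤ ∫⁻ y, ENNReal.ofReal (f y) * ENNReal.ofReal (dist x y ^ (s - (n : ℝ)))),
    ∫⁻ x, ENNReal.ofReal (f x ^ p)

/-- A set `E ⊆ ℝⁿ` is `(s,p)`-uniformly fat:
`R_{s,p}(B(x,r) ∩ E) ≥ σ r^{n-sp}` for all `x ∈ E`, `r > 0`. -/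
def UniformlyFat (n : ℕ) (s p : ℝ) (E : Set (Euc n)) : Prop :=
  ∃ σ : ℝ, 0 < σ ∧ ∀ x ∈ E, ∀ r : ℝ, 0 < r →
    ENNReal.ofReal (σ * r ^ ((n : ℝ) - s * p)) ≤ rieszCap n s p (Metric.ball x r ∩ E)

/-- A set `E ⊆ ℝⁿ` is locally `(s,p)`-uniformly fat:
`R_{s,p}(B(x,r) ∩ E) ≥ σ r^{n-sp}` for all `x ∈ E`, `0 < r < r₀`. -/
def LocallyUniformlyFat (n : ℕ) (s p : ℝ) (E : Set (Euc n)) : Prop :=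
  ∃ σ r₀ : ℝ, 0 < σ ∧ 0 < r₀ ∧ ∀ x ∈ E, ∀ r : ℝ, 0 < r → r < r₀ →
    ENNReal.ofReal (σ * r ^ ((n : ℝ) - s * p)) ≤ rieszCap n s p (Metric.ball x r ∩ E)

/-- An open set `G ⊆ ℝⁿ` admits the `(s,p)`-Hardy inequality:
`∫_G |u|^p dist(x,∂G)^{-sp} dx ≤ c ∫_G ∫_G |u(x)-u(y)|^p |x-y|^{-(n+sp)} dy dx`
for every `u ∈ C_c^∞(G)`. -/
def AdmitsHardy (n : ℕ) (s p : ℝ) (G : Set (Euc n)) : Prop :=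
  ∃ c : ℝ, 0 < c ∧ ∀ u : Euc n → ℝ,
    ContDiff ℝ (⊤ : ℕ∞) u → HasCompactSupport u → tsupport u ⊆ G →
    (∫⁻ x in G, ENNReal.ofReal (|u x| ^ p / Metric.infDist x (frontier G) ^ (s * p))) ≤
      ENNReal.ofReal c *
        ∫⁻ x in G, ∫⁻ y in G, ENNReal.ofReal (|u x - u y| ^ p / dist x y ^ ((n : ℝ) + s * p))

/-- `U` is a `c`-John domain with center point `x₀`: every `x ∈ U` is joined to `x₀`
by an arc-length-parameterized (here: 1-Lipschitz) curve `γ : [0,ℓ] → U` with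
`dist(γ(t), ∂U) ≥ t/c`. -/
def IsJohnDomain (n : ℕ) (c : ℝ) (U : Set (Euc n)) (x₀ : Euc n) : Prop :=
  IsOpen U ∧ IsConnected U ∧ x₀ ∈ U ∧
  ∀ x ∈ U, ∃ ℓ : ℝ, 0 ≤ ℓ ∧ ∃ γ : ℝ → Euc n,
    LipschitzOnWith 1 γ (Set.Icc 0 ℓ) ∧ γ 0 = x ∧ γ ℓ = x₀ ∧
    ∀ t ∈ Set.Icc 0 ℓ, γ t ∈ U ∧ t / c ≤ Metric.infDist (γ t) (frontier U)

/-- `G_{x,c}`: the union of all `c`-John subdomains of `G` with center point `x`. -/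
def johnPart (n : ℕ) (c : ℝ) (G : Set (Euc n)) (x : Euc n) : Set (Euc n) :=
  ⋃₀ {U : Set (Euc n) | U ⊆ G ∧ IsJohnDomain n c U x}

/-- The `c`-visual boundary of `G` near `x`: `∂^vis_{x,c} G = ∂G ∩ ∂G_{x,c}`. -/
def visualBoundary (n : ℕ) (c : ℝ) (G : Set (Euc n)) (x : Euc n) : Set (Euc n) :=
  frontier G ∩ frontier (johnPart n c G x)

/-- `G` is a uniform domain with constant `C`. -/
def IsUniformDomain (n : ℕ) (C : ℝ) (G : Set (Euc n)) : Prop :=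
  IsOpen G ∧ IsConnected G ∧
  ∀ x ∈ G, ∀ y ∈ G, ∃ ℓ : ℝ, 0 ≤ ℓ ∧ ℓ ≤ C * dist x y ∧
    ∃ γ : ℝ → Euc n, LipschitzOnWith 1 γ (Set.Icc 0 ℓ) ∧ γ 0 = x ∧ γ ℓ = y ∧
      ∀ t ∈ Set.Icc 0 ℓ, γ t ∈ G ∧
        min (dist (γ t) x) (dist (γ t) y) / C ≤ Metric.infDist (γ t) (frontier G)

/-- The closed axis-parallel cube with center `z` and side length `ℓ`. -/
def cube (n : ℕ) (z : Euc n) (ℓ : ℝ) : Set (Euc n) := {y | ∀ i, |y i - z i| ≤ ℓ / 2}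

/-- Distance between two sets. -/
def setSetDist (n : ℕ) (A B : Set (Euc n)) : ℝ := sInf (Set.image2 dist A B)

/-- `Q = cube z ℓ` is a Whitney cube of the open set `G`:
`Q ⊆ G` and `diam Q ≤ dist(Q, ∂G) ≤ 4 diam Q`. -/
def IsWhitneyCube (n : ℕ) (G : Set (Euc n)) (z : Euc n) (ℓ : ℝ) : Prop :=
  0 < ℓ ∧ cube n z ℓ ⊆ G ∧
    Metric.diam (cube n z ℓ) ≤ setSetDist n (cube n z ℓ) (frontier G) ∧
    setSetDist n (cube n z ℓ) (frontier G) ≤ 4 * Metric.diam (cube n z ℓ)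

/-- The `p`-th power of the Gagliardo `(s,p)`-seminorm of `u` on `A`:
`|u|_{W^{s,p}(A)}^p = ∫_A ∫_A |u(x)-u(y)|^p |x-y|^{-(n+sp)} dy dx`. -/
def gagliardoP (n : ℕ) (s p : ℝ) (A : Set (Euc n)) (u : Euc n → ℝ) : ℝ≥0∞ :=
  ∫⁻ x in A, ∫⁻ y in A, ENNReal.ofReal (|u x - u y| ^ p / dist x y ^ ((n : ℝ) + s * p))

/-- `E` is an Ahlfors `λ`-regular set: `E` is closed and
`C⁻¹ r^λ ≤ H^λ(B(x,r) ∩ E) ≤ C r^λ` for `x ∈ E`, `0 < r < diam E`. -/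
def AhlforsRegular (n : ℕ) (lam : ℝ) (E : Set (Euc n)) : Prop :=
  IsClosed E ∧ ∃ C : ℝ, 1 < C ∧ ∀ x ∈ E, ∀ r : ℝ, 0 < r →
    ENNReal.ofReal r < EMetric.diam E →
      ENNReal.ofReal (C⁻¹ * r ^ lam) ≤ μH[lam] (Metric.ball x r ∩ E) ∧
      μH[lam] (Metric.ball x r ∩ E) ≤ ENNReal.ofReal (C * r ^ lam)

section VisAux

variable {n : ℕ}

lemma aux_le_infDist {s : Set (Euc n)} {p : Euc n} {r : ℝ} (hs : s.Nonempty)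
    (h : ∀ y ∈ s, r ≤ dist p y) : r ≤ infDist p s := by
  by_contra hlt
  push_neg at hlt
  obtain ⟨y, hy, hd⟩ := (infDist_lt_iff hs).1 hlt
  exact absurd (h y hy) (not_le.2 hd)

lemma aux_infDist_of_ball_subset {U : Set (Euc n)} (hU : IsOpen U) (hne : U ≠ univ)
    {p : Euc n} {r : ℝ} (h : ball p r ⊆ U) : r ≤ infDist p (frontier U) := by
  rcases le_or_gt r 0 with h0 | h0
  · exact h0.trans infDist_nonneg
  have hfr : (frontier U).Nonempty := by
    by_contra he
    rw [Set.not_nonempty_iff_eq_empty] at he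
    rcases isClopen_iff.1 (isClopen_iff_frontier_eq_empty.2 he) with h' | h'
    · exact (Set.notMem_empty p) (h' ▸ h (mem_ball_self h0))
    · exact hne h'
  refine aux_le_infDist hfr fun y hy => ?_
  by_contra hd
  push_neg at hd
  have hyU : y ∈ U := h (by rwa [mem_ball, dist_comm])
  exact (Set.eq_empty_iff_forall_notMem.1 hU.inter_frontier_eq y) ⟨hyU, hy⟩

lemma aux_ball_infDist_subset {G : Set (Euc n)} (hG : IsOpen G) {p : Euc n} (hp : p ∈ G) :
    ball p (infDist p (frontier G)) ⊆ G := by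
  intro q hq
  by_contra hqG
  have hs : IsPreconnected (segment ℝ p q) := (convex_segment p q).isPreconnected
  have hnofr : ∀ y ∈ segment ℝ p q, y ∉ frontier G := by
    intro y hy hyF
    have h1 : dist p y + dist y q = dist p q := dist_add_dist_of_mem_segment hy
    have h2 : infDist p (frontier G) ≤ dist p y := infDist_le_dist_of_mem hyF
    have h3 : dist p q < infDist p (frontier G) := mem_ball'.1 hq
    have := dist_nonneg (x := y) (y := q)
    linarith
  have hsub : segment ℝ p q ⊆ interior G ∪ interior Gᶜ := by
    intro y hy
    by_cases hyc : y ∈ closure G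
    · left
      have : y ∈ closure G \ frontier G := ⟨hyc, hnofr y hy⟩
      rw [show frontier G = closure G \ interior G from rfl] at this
      simpa using this
    · right
      rw [interior_compl]
      exact hyc
  have hdisj : Disjoint (interior G) (interior Gᶜ) :=
    Set.disjoint_left.2 fun a ha hb => (interior_subset hb) (interior_subset ha)
  rcases hs.subset_or_subset isOpen_interior isOpen_interior hdisj hsub with hL | hR
  · exact hqG (interior_subset (hL (right_mem_segment ℝ p q)))
  · exact (interior_subset (hR (left_mem_segment ℝ p q)) : p ∈ Gᶜ) hp

def segCurve (p q : Euc n) : ℝ → Euc n := fun s => p + (s / dist p q) • (q - p)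

lemma segCurve_zero (p q : Euc n) : segCurve p q 0 = p := by simp [segCurve]

lemma segCurve_end (p q : Euc n) : segCurve p q (dist p q) = q := by
  rcases eq_or_ne (dist p q) 0 with h | h
  · have : p = q := by rwa [dist_eq_zero] at h
    simp [segCurve, this]
  · simp [segCurve, div_self h]

lemma segCurve_sub (p q : Euc n) (s t : ℝ) :
    segCurve p q s - segCurve p q t = ((s - t) / dist p q) • (q - p) := by
  simp only [segCurve, add_sub_add_left_eq_sub, ← sub_smul, sub_div]

lemma segCurve_lip (p q : Euc n) : LipschitzOnWith 1 (segCurve p q) (Icc 0 (dist p q)) := by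
  rw [lipschitzOnWith_iff_dist_le_mul]
  intro s _ t _
  rcases eq_or_ne (dist p q) 0 with h | h
  · have hpq : p = q := by rwa [dist_eq_zero] at h
    simp [segCurve, hpq, dist_nonneg]
  · have hD : 0 < dist p q := lt_of_le_of_ne dist_nonneg (Ne.symm h)
    rw [dist_eq_norm, segCurve_sub, norm_smul, Real.norm_eq_abs, abs_div, abs_of_pos hD,
      show ‖q - p‖ = dist p q from by rw [← dist_eq_norm, dist_comm], div_mul_cancel₀ _ h,
      Real.dist_eq, NNReal.coe_one, one_mul]

lemma segCurve_dist_end (p q : Euc n) {s : ℝ} (hs : s ∈ Icc 0 (dist p q)) :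
    dist (segCurve p q s) q = dist p q - s := by
  rcases eq_or_ne (dist p q) 0 with h | h
  · have hpq : p = q := by rwa [dist_eq_zero] at h
    have hs0 : s = 0 := le_antisymm (h ▸ hs.2) hs.1
    simp [segCurve, hpq, hs0, h]
  · have hD : 0 < dist p q := lt_of_le_of_ne dist_nonneg (Ne.symm h)
    have h2 : segCurve p q s - q = ((s - dist p q) / dist p q) • (q - p) := by
      have := segCurve_sub p q s (dist p q)
      rwa [segCurve_end] at this
    rw [dist_eq_norm, h2, norm_smul, Real.norm_eq_abs, abs_div, abs_of_pos hD,
      show |s - dist p q| = dist p q - s from by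
        rw [abs_of_nonpos (by linarith [hs.2])]; ring,
      show ‖q - p‖ = dist p q from by rw [← dist_eq_norm, dist_comm],
      div_mul_cancel₀ _ h]

def pglue (a : ℝ) (f g : ℝ → Euc n) : ℝ → Euc n := fun t => if t ≤ a then f t else g (t - a)

lemma pglue_of_le {a : ℝ} {f g : ℝ → Euc n} {t : ℝ} (h : t ≤ a) : pglue a f g t = f t :=
  if_pos h

lemma pglue_of_gt {a : ℝ} {f g : ℝ → Euc n} {t : ℝ} (h : a < t) : pglue a f g t = g (t - a) :=
  if_neg (not_le.2 h)

lemma pglue_end {a b : ℝ} {f g : ℝ → Euc n} (hb : 0 ≤ b) (hfg : f a = g 0) :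
    pglue a f g (a + b) = g b := by
  rcases hb.eq_or_lt with rfl | h
  · rw [add_zero, pglue_of_le le_rfl, hfg]
  · rw [pglue_of_gt (by linarith), add_sub_cancel_left]

lemma pglue_lip {a b : ℝ} {f g : ℝ → Euc n} (ha : 0 ≤ a) (hb : 0 ≤ b)
    (hf : LipschitzOnWith 1 f (Icc 0 a)) (hg : LipschitzOnWith 1 g (Icc 0 b))
    (hfg : f a = g 0) : LipschitzOnWith 1 (pglue a f g) (Icc 0 (a + b)) := by
  rw [lipschitzOnWith_iff_dist_le_mul] at *
  have key : ∀ s t : ℝ, s ∈ Icc 0 (a + b) → t ∈ Icc 0 (a + b) → s ≤ t →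
      dist (pglue a f g s) (pglue a f g t) ≤ dist s t := by
    intro s t hs ht hst
    rcases le_or_gt t a with h1 | h1
    · rw [pglue_of_le (hst.trans h1), pglue_of_le h1]
      simpa using hf s ⟨hs.1, hst.trans h1⟩ t ⟨ht.1, h1⟩
    rcases le_or_gt s a with h2 | h2
    · rw [pglue_of_le h2, pglue_of_gt h1]
      have e1 := hf s ⟨hs.1, h2⟩ a ⟨ha, le_rfl⟩
      have e2 := hg 0 ⟨le_rfl, hb⟩ (t - a) ⟨by linarith, by linarith [ht.2]⟩
      rw [hfg] at e1
      simp only [NNReal.coe_one, one_mul] at e1 e2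
      calc dist (f s) (g (t - a)) ≤ dist (f s) (g 0) + dist (g 0) (g (t - a)) :=
            dist_triangle _ _ _
        _ ≤ dist s a + dist 0 (t - a) := add_le_add e1 e2
        _ ≤ dist s t := by
            rw [Real.dist_eq, Real.dist_eq, Real.dist_eq,
              abs_of_nonpos (by linarith : s - a ≤ 0),
              abs_of_nonpos (by linarith : (0:ℝ) - (t - a) ≤ 0),
              abs_of_nonpos (by linarith : s - t ≤ 0)]
            linarith
    · rw [pglue_of_gt h2, pglue_of_gt h1]
      have e := hg (s - a) ⟨by linarith, by linarith [hs.2]⟩ (t - a) ⟨by linarith, by linarith [ht.2]⟩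
      simp only [NNReal.coe_one, one_mul] at e ⊢
      calc dist (g (s - a)) (g (t - a)) ≤ dist (s - a) (t - a) := e
        _ = dist s t := by rw [Real.dist_eq, Real.dist_eq]; ring_nf
  intro s hs t ht
  rcases le_total s t with h | h
  · simpa using key s t hs ht h
  · have h3 := key t s ht hs h
    rw [dist_comm (pglue a f g t) (pglue a f g s), dist_comm t s] at h3
    simpa using h3

lemma lip_shift {γ : ℝ → Euc n} {ℓ u : ℝ} (hγ : LipschitzOnWith 1 γ (Icc 0 ℓ))
    (hu : u ∈ Icc 0 ℓ) : LipschitzOnWith 1 (fun s => γ (u + s)) (Icc 0 (ℓ - u)) := by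
  rw [lipschitzOnWith_iff_dist_le_mul] at *
  intro s hs t ht
  have := hγ (u + s) ⟨by linarith [hu.1, hs.1], by linarith [hs.2]⟩
      (u + t) ⟨by linarith [hu.1, ht.1], by linarith [ht.2]⟩
  have he : dist (u + s) (u + t) = dist s t := by
    rw [Real.dist_eq, Real.dist_eq]; ring_nf
  rwa [he] at this

lemma lip_rev {γ : ℝ → Euc n} {ℓ u : ℝ} (hγ : LipschitzOnWith 1 γ (Icc 0 ℓ))
    (hu : u ∈ Icc 0 ℓ) : LipschitzOnWith 1 (fun s => γ (u - s)) (Icc 0 u) := by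
  rw [lipschitzOnWith_iff_dist_le_mul] at *
  intro s hs t ht
  have := hγ (u - s) ⟨by linarith [hs.2], by linarith [hu.2, hs.1]⟩
      (u - t) ⟨by linarith [ht.2], by linarith [hu.2, ht.1]⟩
  have he : dist (u - s) (u - t) = dist s t := by
    rw [Real.dist_eq, Real.dist_eq, show u - s - (u - t) = -(s - t) from by ring, abs_neg]
  rwa [he] at this

lemma aux_tube {G : Set (Euc n)} (hG : IsOpen G) {γ : ℝ → Euc n} {ℓ ρ : ℝ}
    (hℓ : 0 ≤ ℓ) (hρ : 0 < ρ) (hlip : LipschitzOnWith 1 γ (Icc 0 ℓ))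
    (hmem : ∀ t ∈ Icc 0 ℓ, γ t ∈ G)
    (hdepth : ∀ t ∈ Icc 0 ℓ, ρ ≤ infDist (γ t) (frontier G)) :
    ∃ T : Set (Euc n), IsOpen T ∧ IsPreconnected T ∧ T ⊆ G ∧
      (∀ t ∈ Icc 0 ℓ, ball (γ t) ρ ⊆ T) ∧
      (∀ p ∈ T, ∃ u ∈ Icc 0 ℓ, p ∈ ball (γ u) ρ) := by
  refine ⟨⋃ t : Icc 0 ℓ, ball (γ t.1) ρ, isOpen_iUnion fun t => isOpen_ball, ?_, ?_, ?_, ?_⟩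
  · have him : IsPreconnected (γ '' Icc 0 ℓ) := isPreconnected_Icc.image _ hlip.continuousOn
    have heq : (⋃ t : Icc 0 ℓ, ball (γ t.1) ρ) =
        ⋃ t : Icc 0 ℓ, (ball (γ t.1) ρ ∪ γ '' Icc 0 ℓ) := by
      apply Subset.antisymm
      · exact iUnion_mono fun t => subset_union_left
      · refine iUnion_subset fun t => union_subset (subset_iUnion_of_subset t Subset.rfl) ?_
        rintro p ⟨s, hs, rfl⟩
        exact mem_iUnion.2 ⟨⟨s, hs⟩, mem_ball_self hρ⟩
    rw [heq]
    apply isPreconnected_iUnion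
    · exact ⟨γ 0, mem_iInter.2 fun t => Or.inr ⟨0, ⟨le_refl 0, hℓ⟩, rfl⟩⟩
    · intro t
      exact IsPreconnected.union (γ t.1) (mem_ball_self hρ) ⟨t.1, t.2, rfl⟩
        (convex_ball _ _).isPreconnected him
  · refine iUnion_subset fun t => ?_
    intro p hp
    exact aux_ball_infDist_subset hG (hmem t.1 t.2) (ball_subset_ball (hdepth t.1 t.2) hp)
  · intro t ht
    exact subset_iUnion_of_subset ⟨t, ht⟩ Subset.rfl
  · intro p hp
    obtain ⟨t, ht⟩ := mem_iUnion.1 hp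
    exact ⟨t.1, t.2, ht⟩


lemma aux_div_le_div {a b c : ℝ} (h : a ≤ b) (hc : 0 < c) : a / c ≤ b / c := by
  rw [div_le_div_iff₀ hc hc]
  nlinarith

end VisAux

set_option maxHeartbeats 2000000 in
/-- If `G ⊆ ℝⁿ` is a uniform domain with uniformity constant `C`, then there
is `c ≥ 1`, depending only on `n` and `C`, such that for all `x ∈ G`,
`∂G ∩ B(x, 2 dist(x,∂G)) ⊆ ∂^vis_{x,c} G`. -/


theorem statement3 (n : ℕ) (C : ℝ) (hC : 1 ≤ C) :
    ∃ c : ℝ, 1 ≤ c ∧ ∀ (G : Set (Euc n)), IsUniformDomain n C G →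
      ∀ x ∈ G, frontier G ∩ Metric.ball x (2 * Metric.infDist x (frontier G)) ⊆
        visualBoundary n c G x := by
  have hC0 : (0 : ℝ) < C := lt_of_lt_of_le one_pos hC
  have hC3 : (1 : ℝ) ≤ C ^ 3 := one_le_pow₀ hC
  refine ⟨100 * C ^ 3, by linarith, ?_⟩
  intro G hGU x hx w hw
  obtain ⟨hGopen, hGconn, hunif⟩ := hGU
  obtain ⟨hwF, hwB⟩ := hw
  rw [mem_ball] at hwB
  have hc₀ : (0 : ℝ) < 100 * C ^ 3 := by positivity
  have hwG : w ∉ G := fun h =>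
    (Set.eq_empty_iff_forall_notMem.1 hGopen.inter_frontier_eq w) ⟨h, hwF⟩
  have hFne : (frontier G).Nonempty := ⟨w, hwF⟩
  have hxF : x ∉ frontier G := fun h =>
    (Set.eq_empty_iff_forall_notMem.1 hGopen.inter_frontier_eq x) ⟨hx, h⟩
  have hd0 : 0 < infDist x (frontier G) :=
    (isClosed_frontier.notMem_iff_infDist_pos hFne).1 hxF
  set d : ℝ := infDist x (frontier G) with hddef
  have hdxw : d ≤ dist x w := infDist_le_dist_of_mem hwF
  have hdxw2 : dist x w < 2 * d := by rwa [dist_comm] at hwB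
  -- existence of deep points near w at every scale
  have hzex : ∀ r : ℝ, 0 < r → r ≤ d → ∃ z ∈ G, dist z w = r / 2 ∧
      r / (4 * C) ≤ infDist z (frontier G) := by
    intro r hr hrd
    obtain ⟨y, hyG, hywd⟩ := Metric.mem_closure_iff.1 (frontier_subset_closure hwF)
      (r / (16 * C)) (by positivity)
    obtain ⟨ℓ, hℓ0, hℓle, γ, hγlip, hγ0, hγℓ, hγprop⟩ := hunif x hx y hyG
    have hcont : ContinuousOn (fun t => dist (γ t) w) (Icc 0 ℓ) :=
      (Continuous.dist continuous_id continuous_const).comp_continuousOn hγlip.continuousOn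
    have h16 : r / (16 * C) ≤ r / 16 := by
      rw [div_le_div_iff₀ (by positivity) (by norm_num)]; nlinarith
    have hmem2 : r / 2 ∈ Icc (dist (γ ℓ) w) (dist (γ 0) w) := by
      rw [hγ0, hγℓ]
      constructor
      · rw [dist_comm]; linarith [hywd.le]
      · linarith
    obtain ⟨t, ht, hteq⟩ := intermediate_value_Icc' hℓ0 hcont hmem2
    simp only [] at hteq
    refine ⟨γ t, (hγprop t ht).1, hteq, ?_⟩
    have hmin := (hγprop t ht).2
    have htri1 := dist_triangle x (γ t) w
    rw [dist_comm x (γ t)] at htri1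
    rw [hteq] at htri1
    have h1 : r / 4 ≤ dist (γ t) x := by linarith
    have htri2 := dist_triangle (γ t) y w
    rw [dist_comm y w, hteq] at htri2
    have h2 : r / 4 ≤ dist (γ t) y := by linarith [hywd.le]
    have h3 : r / 4 ≤ min (dist (γ t) x) (dist (γ t) y) := le_min h1 h2
    calc r / (4 * C) = (r / 4) / C := by ring
      _ ≤ min (dist (γ t) x) (dist (γ t) y) / C := aux_div_le_div h3 hC0
      _ ≤ _ := hmin
  -- main induction on dyadic scales
  have key : ∀ k : ℕ, ∃ (U : Set (Euc n)) (z : Euc n) (L : ℝ) (ζ : ℝ → Euc n),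
      U ⊆ G ∧ IsOpen U ∧ IsPreconnected U ∧ x ∈ U ∧ z ∈ U ∧
      dist z w = d / 2 ^ k / 2 ∧ d / 2 ^ k / (4 * C) ≤ infDist z (frontier G) ∧
      0 ≤ L ∧ LipschitzOnWith 1 ζ (Icc 0 L) ∧ ζ 0 = z ∧ ζ L = x ∧
      (∀ t ∈ Icc 0 L, ball (ζ t) ((t + 2 * C * (d / 2 ^ k)) / (100 * C ^ 3)) ⊆ U) ∧
      (∀ p ∈ U, ∃ m, 0 ≤ m ∧ ∃ η : ℝ → Euc n, LipschitzOnWith 1 η (Icc 0 m) ∧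
        η 0 = p ∧ η m = x ∧ ∀ s ∈ Icc 0 m, ball (η s) (s / (100 * C ^ 3)) ⊆ U) := by
    intro k
    induction k with
    | zero =>
      simp only [pow_zero, div_one]
      obtain ⟨z, hzG, hzw, hzdep⟩ := hzex d hd0 le_rfl
      obtain ⟨ℓ, hℓ0, hℓle, γ, hγlip, hγ0, hγend, hγprop⟩ := hunif x hx z hzG
      have hxz : dist x z ≤ 5 / 2 * d := by
        have htri := dist_triangle x w z
        rw [dist_comm w z] at htri
        linarith [hzw.le, hzw.ge]
      have hℓ2 : ℓ ≤ 5 / 2 * C * d := by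
        nlinarith [mul_le_mul_of_nonneg_left hxz hC0.le]
      have hρ0 : (0:ℝ) < d / (8 * C ^ 2) := by positivity
      have hdep : ∀ t ∈ Icc 0 ℓ, d / (8 * C ^ 2) ≤ infDist (γ t) (frontier G) := by
        intro t ht
        have hmin := (hγprop t ht).2
        have hx2 : infDist x (frontier G) ≤ infDist (γ t) (frontier G) + dist x (γ t) :=
          infDist_le_infDist_add_dist
        have hz2 : infDist z (frontier G) ≤ infDist (γ t) (frontier G) + dist z (γ t) :=
          infDist_le_infDist_add_dist
        rw [dist_comm x (γ t)] at hx2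
        rw [dist_comm z (γ t)] at hz2
        rw [← hddef] at hx2
        have hid0 : 0 ≤ infDist (γ t) (frontier G) := infDist_nonneg
        by_cases h1 : dist (γ t) x ≤ d / 2
        · have h8 : d / (8 * C ^ 2) ≤ d / 2 := by
            rw [div_le_div_iff₀ (by positivity) (by norm_num)]; nlinarith
          linarith
        by_cases h2 : dist (γ t) z ≤ d / (8 * C)
        · have he : d / (4 * C) - d / (8 * C) = d / (8 * C) := by ring
          have h8 : d / (8 * C ^ 2) ≤ d / (8 * C) := by
            rw [div_le_div_iff₀ (by positivity) (by positivity)]; nlinarith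
          linarith
        · push_neg at h1 h2
          have hminge : d / (8 * C) ≤ min (dist (γ t) x) (dist (γ t) z) := by
            apply le_min
            · have hh : d / (8 * C) ≤ d / 2 := by
                rw [div_le_div_iff₀ (by positivity) (by norm_num)]; nlinarith
              linarith
            · linarith
          calc d / (8 * C ^ 2) = d / (8 * C) / C := by ring
            _ ≤ min (dist (γ t) x) (dist (γ t) z) / C := aux_div_le_div hminge hC0
            _ ≤ _ := hmin
      obtain ⟨T, hTopen, hTpre, hTG, hTball, hTrep⟩ :=
        aux_tube hGopen hℓ0 hρ0 hγlip (fun t ht => (hγprop t ht).1) hdep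
      have hxT : x ∈ T := by
        rw [← hγ0]; exact hTball 0 ⟨le_rfl, hℓ0⟩ (mem_ball_self hρ0)
      have hzT : z ∈ T := by
        rw [← hγend]; exact hTball ℓ ⟨hℓ0, le_rfl⟩ (mem_ball_self hρ0)
      refine ⟨T, z, ℓ, fun t => γ (ℓ - t), hTG, hTopen, hTpre, hxT, hzT, hzw, hzdep, hℓ0,
        lip_rev hγlip ⟨hℓ0, le_rfl⟩, by simp [hγend], by simp [hγ0], ?_, ?_⟩
      · intro t ht
        have hrad : (t + 2 * C * d) / (100 * C ^ 3) ≤ d / (8 * C ^ 2) := by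
          rw [div_le_div_iff₀ hc₀ (by positivity)]
          have h1 : t + 2 * C * d ≤ 9 / 2 * (C * d) := by
            have := mul_pos hC0 hd0
            nlinarith [ht.2]
          have h2 := mul_le_mul_of_nonneg_right h1 (by positivity : (0:ℝ) ≤ 8 * C ^ 2)
          nlinarith [mul_pos hd0 (pow_pos hC0 3)]
        exact (ball_subset_ball hrad).trans
          (hTball (ℓ - t) ⟨by linarith [ht.2], by linarith [ht.1]⟩)
      · intro p hp
        obtain ⟨u, hu, hpu⟩ := hTrep p hp
        have hs₁ : dist p (γ u) < d / (8 * C ^ 2) := mem_ball.1 hpu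
        refine ⟨dist p (γ u) + u, add_nonneg dist_nonneg hu.1,
          pglue (dist p (γ u)) (segCurve p (γ u)) (fun s => γ (u - s)),
          pglue_lip dist_nonneg hu.1 (segCurve_lip p (γ u)) (lip_rev hγlip hu)
            (by simp [segCurve_end]),
          by rw [pglue_of_le dist_nonneg, segCurve_zero], ?_, ?_⟩
        · rw [pglue_end hu.1 (by simp [segCurve_end])]
          show γ (u - u) = x
          rw [sub_self, hγ0]
        · intro s hs
          by_cases hcase : s ≤ dist p (γ u)
          · rw [pglue_of_le hcase]
            have hdse := segCurve_dist_end p (γ u) ⟨hs.1, hcase⟩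
            refine Subset.trans (ball_subset_ball' ?_) (hTball u hu)
            rw [hdse]
            have hsc : s / (100 * C ^ 3) ≤ s := div_le_self hs.1 (by linarith)
            linarith
          · push_neg at hcase
            rw [pglue_of_gt hcase]
            have harg : u - (s - dist p (γ u)) ∈ Icc 0 ℓ :=
              ⟨by linarith [hs.2], by linarith [hu.2, hcase]⟩
            refine Subset.trans (ball_subset_ball ?_) (hTball _ harg)
            rw [div_le_div_iff₀ hc₀ (by positivity)]
            have hC2 : (1:ℝ) ≤ C ^ 2 := one_le_pow₀ hC
            have h8 : d / (8 * C ^ 2) ≤ d / 8 := by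
              rw [div_le_div_iff₀ (by positivity) (by norm_num)]; nlinarith
            have hCd : d ≤ C * d := by nlinarith
            have h1 : s ≤ 3 * (C * d) := by linarith [hs.2, hu.2]
            have h2 := mul_le_mul_of_nonneg_right h1 (by positivity : (0:ℝ) ≤ 8 * C ^ 2)
            nlinarith [mul_pos hd0 (pow_pos hC0 3)]
    | succ k ih =>
      obtain ⟨U, z, L, ζ, hUG, hUopen, hUpre, hxU, hzU, hzw, hzdep, hL0, hζlip, hζ0, hζL,
        hζball, hη⟩ := ih
      have hrk0 : (0:ℝ) < d / 2 ^ k := by positivity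
      have h2p : d / 2 ^ (k + 1) = d / 2 ^ k / 2 := by rw [pow_succ]; ring
      have hrk1d : d / 2 ^ (k + 1) ≤ d :=
        div_le_self hd0.le (one_le_pow₀ (by norm_num : (1:ℝ) ≤ 2))
      obtain ⟨z', hz'G, hz'w, hz'dep⟩ := hzex (d / 2 ^ (k + 1)) (by positivity) hrk1d
      obtain ⟨ℓ, hℓ0, hℓle, γ, hγlip, hγ0, hγend, hγprop⟩ := hunif z' hz'G z (hUG hzU)
      have hzz' : dist z' z ≤ 3 / 4 * (d / 2 ^ k) := by
        have htri := dist_triangle z' w z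
        rw [dist_comm w z] at htri
        rw [h2p] at hz'w
        linarith [hz'w.le, hz'w.ge, hzw.le, hzw.ge]
      have hℓ2 : ℓ ≤ 3 / 4 * C * (d / 2 ^ k) := by
        nlinarith [mul_le_mul_of_nonneg_left hzz' hC0.le]
      have hρ0 : (0:ℝ) < d / 2 ^ k / (16 * C ^ 2) := by positivity
      have hz'dep' : d / 2 ^ k / (8 * C) ≤ infDist z' (frontier G) := by
        rw [h2p] at hz'dep
        have he : d / 2 ^ k / 2 / (4 * C) = d / 2 ^ k / (8 * C) := by ring
        linarith [hz'dep]
      have hdep : ∀ t ∈ Icc 0 ℓ, d / 2 ^ k / (16 * C ^ 2) ≤ infDist (γ t) (frontier G) := by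
        intro t ht
        have hmin := (hγprop t ht).2
        have hz2 : infDist z (frontier G) ≤ infDist (γ t) (frontier G) + dist z (γ t) :=
          infDist_le_infDist_add_dist
        have hz'2 : infDist z' (frontier G) ≤ infDist (γ t) (frontier G) + dist z' (γ t) :=
          infDist_le_infDist_add_dist
        rw [dist_comm z (γ t)] at hz2
        rw [dist_comm z' (γ t)] at hz'2
        have hid0 : 0 ≤ infDist (γ t) (frontier G) := infDist_nonneg
        by_cases h1 : dist (γ t) z ≤ d / 2 ^ k / (8 * C)
        · have he : d / 2 ^ k / (4 * C) - d / 2 ^ k / (8 * C) = d / 2 ^ k / (8 * C) := by ring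
          have h8 : d / 2 ^ k / (16 * C ^ 2) ≤ d / 2 ^ k / (8 * C) := by
            rw [div_le_div_iff₀ (by positivity) (by positivity)]; nlinarith
          linarith [hzdep]
        by_cases h2 : dist (γ t) z' ≤ d / 2 ^ k / (16 * C)
        · have h8 : d / 2 ^ k / (16 * C ^ 2) ≤ d / 2 ^ k / (16 * C) := by
            rw [div_le_div_iff₀ (by positivity) (by positivity)]; nlinarith
          have he : d / 2 ^ k / (8 * C) - d / 2 ^ k / (16 * C) = d / 2 ^ k / (16 * C) := by ring
          linarith [hz'dep']
        · push_neg at h1 h2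
          have hminge : d / 2 ^ k / (16 * C) ≤ min (dist (γ t) z') (dist (γ t) z) := by
            apply le_min
            · linarith
            · have hh : d / 2 ^ k / (16 * C) ≤ d / 2 ^ k / (8 * C) := by
                rw [div_le_div_iff₀ (by positivity) (by positivity)]; nlinarith
              linarith
          calc d / 2 ^ k / (16 * C ^ 2) = d / 2 ^ k / (16 * C) / C := by ring
            _ ≤ min (dist (γ t) z') (dist (γ t) z) / C := aux_div_le_div hminge hC0
            _ ≤ _ := hmin
      obtain ⟨T, hTopen, hTpre, hTG, hTball, hTrep⟩ :=
        aux_tube hGopen hℓ0 hρ0 hγlip (fun t ht => (hγprop t ht).1) hdep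
      have hzT : z ∈ T := by
        rw [← hγend]; exact hTball ℓ ⟨hℓ0, le_rfl⟩ (mem_ball_self hρ0)
      have hz'T : z' ∈ T := by
        rw [← hγ0]; exact hTball 0 ⟨le_rfl, hℓ0⟩ (mem_ball_self hρ0)
      have hCr : d / 2 ^ k ≤ C * (d / 2 ^ k) := by nlinarith
      have hC2 : (1:ℝ) ≤ C ^ 2 := one_le_pow₀ hC
      have h16 : d / 2 ^ k / (16 * C ^ 2) ≤ d / 2 ^ k / 16 := by
        rw [div_le_div_iff₀ (by positivity) (by norm_num)]; nlinarith
      refine ⟨U ∪ T, z', ℓ + L, pglue ℓ γ ζ, union_subset hUG hTG, hUopen.union hTopen,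
        IsPreconnected.union z hzU hzT hUpre hTpre, Or.inl hxU, Or.inr hz'T, hz'w, hz'dep,
        add_nonneg hℓ0 hL0, pglue_lip hℓ0 hL0 hγlip hζlip (hγend.trans hζ0.symm),
        by rw [pglue_of_le hℓ0, hγ0], by rw [pglue_end hL0 (hγend.trans hζ0.symm), hζL],
        ?_, ?_⟩
      · intro t ht
        by_cases hcase : t ≤ ℓ
        · rw [pglue_of_le hcase]
          have hrad : (t + 2 * C * (d / 2 ^ (k + 1))) / (100 * C ^ 3) ≤
              d / 2 ^ k / (16 * C ^ 2) := by
            rw [h2p, div_le_div_iff₀ hc₀ (by positivity)]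
            have h1 : t + 2 * C * (d / 2 ^ k / 2) ≤ 7 / 4 * (C * (d / 2 ^ k)) := by
              nlinarith [hℓ2, hcase]
            have h2 := mul_le_mul_of_nonneg_right h1
              (by positivity : (0:ℝ) ≤ 16 * C ^ 2)
            nlinarith [mul_pos hrk0 (pow_pos hC0 3)]
          exact (ball_subset_ball hrad).trans
            ((hTball t ⟨ht.1, hcase⟩).trans subset_union_right)
        · push_neg at hcase
          rw [pglue_of_gt hcase]
          have harg : t - ℓ ∈ Icc 0 L := ⟨by linarith, by linarith [ht.2]⟩
          have hrad : (t + 2 * C * (d / 2 ^ (k + 1))) / (100 * C ^ 3) ≤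
              ((t - ℓ) + 2 * C * (d / 2 ^ k)) / (100 * C ^ 3) := by
            apply aux_div_le_div _ hc₀
            rw [h2p]
            nlinarith [hℓ2, mul_pos hC0 hrk0]
          exact (ball_subset_ball hrad).trans
            ((hζball (t - ℓ) harg).trans subset_union_left)
      · intro p hp
        rcases hp with hpU | hpT
        · obtain ⟨m, hm0, η, hlip, h0, hm, hball⟩ := hη p hpU
          exact ⟨m, hm0, η, hlip, h0, hm,
            fun s hs => (hball s hs).trans subset_union_left⟩
        · obtain ⟨u, hu, hpu⟩ := hTrep p hpT
          have hs₁ : dist p (γ u) < d / 2 ^ k / (16 * C ^ 2) := mem_ball.1 hpu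
          have hlu : (0:ℝ) ≤ ℓ - u := by linarith [hu.2]
          have hinner0 : (pglue (ℓ - u) (fun s => γ (u + s)) ζ) 0 = γ u := by
            rw [pglue_of_le hlu]; simp
          have hie : (fun s => γ (u + s)) (ℓ - u) = ζ 0 := by
            have : γ (u + (ℓ - u)) = ζ 0 := by
              rw [show u + (ℓ - u) = ℓ from by ring, hγend, hζ0]
            exact this
          have hinnerlip : LipschitzOnWith 1 (pglue (ℓ - u) (fun s => γ (u + s)) ζ)
              (Icc 0 ((ℓ - u) + L)) :=
            pglue_lip hlu hL0 (lip_shift hγlip hu) hζlip hie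
          refine ⟨dist p (γ u) + ((ℓ - u) + L),
            add_nonneg dist_nonneg (add_nonneg hlu hL0),
            pglue (dist p (γ u)) (segCurve p (γ u)) (pglue (ℓ - u) (fun s => γ (u + s)) ζ),
            pglue_lip dist_nonneg (add_nonneg hlu hL0) (segCurve_lip p (γ u)) hinnerlip
              (by rw [segCurve_end, hinner0]),
            by rw [pglue_of_le dist_nonneg, segCurve_zero], ?_, ?_⟩
          · exact (pglue_end (add_nonneg hlu hL0) (by rw [segCurve_end, hinner0])).trans
              ((pglue_end (a := ℓ - u) (f := fun s => γ (u + s)) hL0 hie).trans hζL)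
          · intro s hs
            by_cases hcase : s ≤ dist p (γ u)
            · rw [pglue_of_le hcase]
              have hdse := segCurve_dist_end p (γ u) ⟨hs.1, hcase⟩
              refine Subset.trans (ball_subset_ball' ?_)
                ((hTball u hu).trans subset_union_right)
              rw [hdse]
              have hsc : s / (100 * C ^ 3) ≤ s := div_le_self hs.1 (by linarith)
              linarith
            · push_neg at hcase
              rw [pglue_of_gt hcase]
              by_cases hcase2 : s - dist p (γ u) ≤ ℓ - u
              · rw [pglue_of_le hcase2]
                have harg : u + (s - dist p (γ u)) ∈ Icc 0 ℓ :=
                  ⟨by linarith [hu.1, hcase.le], by linarith⟩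
                refine Subset.trans (ball_subset_ball ?_)
                  ((hTball _ harg).trans subset_union_right)
                rw [div_le_div_iff₀ hc₀ (by positivity)]
                have h1 : s ≤ C * (d / 2 ^ k) := by linarith [hu.1]
                have h2 := mul_le_mul_of_nonneg_right h1
                  (by positivity : (0:ℝ) ≤ 16 * C ^ 2)
                nlinarith [mul_pos hrk0 (pow_pos hC0 3)]
              · push_neg at hcase2
                rw [pglue_of_gt hcase2]
                have harg : s - dist p (γ u) - (ℓ - u) ∈ Icc 0 L :=
                  ⟨by linarith, by linarith [hs.2]⟩
                have hrad : s / (100 * C ^ 3) ≤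
                    ((s - dist p (γ u) - (ℓ - u)) + 2 * C * (d / 2 ^ k)) / (100 * C ^ 3) := by
                  apply aux_div_le_div _ hc₀
                  linarith [hu.1]
                exact (ball_subset_ball hrad).trans
                  ((hζball _ harg).trans subset_union_left)
  -- conclusion
  refine ⟨hwF, ?_⟩
  have hJG : johnPart n (100 * C ^ 3) G x ⊆ G := sUnion_subset fun U hU => hU.1
  have hwJ : w ∉ johnPart n (100 * C ^ 3) G x := fun h => hwG (hJG h)
  have hwcl : w ∈ closure (johnPart n (100 * C ^ 3) G x) := by
    rw [Metric.mem_closure_iff]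
    intro ε hε
    obtain ⟨k, hk⟩ := exists_pow_lt_of_lt_one (div_pos hε hd0)
      (by norm_num : (1:ℝ)/2 < 1)
    have h2k : (0:ℝ) < 2 ^ k := by positivity
    have hdk : d / 2 ^ k < ε := by
      have hm := mul_lt_mul_of_pos_left hk hd0
      rw [show d * (ε / d) = ε from by field_simp] at hm
      rw [show d * ((1:ℝ)/2) ^ k = d / 2 ^ k from by
        rw [one_div, inv_pow, div_eq_mul_inv]] at hm
      exact hm
    obtain ⟨U, z, L, ζ, hUG, hUopen, hUpre, hxU, hzU, hzw, hzdep, hL0, hζlip, hζ0, hζL,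
      hζball, hη⟩ := key k
    have hUuniv : U ≠ univ := fun h => hwG (hUG (h ▸ mem_univ w))
    have hUJ : U ∈ {V : Set (Euc n) | V ⊆ G ∧ IsJohnDomain n (100 * C ^ 3) V x} := by
      refine ⟨hUG, hUopen, ⟨⟨x, hxU⟩, hUpre⟩, hxU, ?_⟩
      intro p hp
      obtain ⟨m, hm0, η, hηlip, hη0, hηm, hηball⟩ := hη p hp
      refine ⟨m, hm0, η, hηlip, hη0, hηm, fun t htm => ⟨?_, ?_⟩⟩
      · rcases eq_or_lt_of_le htm.1 with h0 | h0
        · rw [← h0, hη0]; exact hp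
        · exact hηball t htm (mem_ball_self (by positivity))
      · exact aux_infDist_of_ball_subset hUopen hUuniv (hηball t htm)
    refine ⟨z, ⟨U, hUJ, hzU⟩, ?_⟩
    rw [dist_comm, hzw]
    have : (0:ℝ) < d / 2 ^ k := by positivity
    linarith
  exact ⟨hwcl, fun h => hwJ (interior_subset h)⟩


end
end

section
/- Let s, p, λ be such that 1<p<∞, 0<sp<n, and n−sp<λ≤n. Let E ⊂ ℝⁿ be a Borel set such that for some constant σ>0 one has H^λ_∞(B(x,r)∩E) ≥ σ r^λ for all x ∈ E and all r>0. Then E is (s,p)-uniformly fat, with fatness constant depending only on σ, λ, n, s, p. -/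
open MeasureTheory Metric Set
open scoped ENNReal NNReal Topology

noncomputable section

-- Hölder on a set
lemma holder_set {n : ℕ} {p q : ℝ} (hpq : p.HolderConjugate q) {f : Euc n → ℝ}
    (hf : Measurable f) (hf0 : ∀ x, 0 ≤ f x) (S : Set (Euc n)) :
    ∫⁻ y in S, ENNReal.ofReal (f y) ≤
      (∫⁻ y in S, ENNReal.ofReal (f y ^ p)) ^ (1/p) * (volume S) ^ (1/q) := by
  have h := ENNReal.lintegral_mul_le_Lp_mul_Lq (volume.restrict S) hpq
    (f := fun y => ENNReal.ofReal (f y)) (g := fun _ => 1)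
    (hf.ennreal_ofReal.aemeasurable) aemeasurable_const
  simp only [Pi.mul_apply, mul_one, ENNReal.one_rpow, lintegral_const,
    Measure.restrict_apply, MeasurableSet.univ, univ_inter, one_mul] at h
  refine h.trans (mul_le_mul' (ENNReal.rpow_le_rpow ?_ (by have := hpq.one_div_nonneg; linarith)) le_rfl)
  refine lintegral_mono fun y => le_of_eq ?_
  rw [← ENNReal.ofReal_rpow_of_nonneg (hf0 y) hpq.nonneg]

-- annulus bound
lemma annulus_bound {n : ℕ} {s : ℝ} (hs : s - (n:ℝ) ≤ 0) {f : Euc n → ℝ}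
    (hf : Measurable f) (x : Euc n) {a : ℝ} (ha : 0 < a) :
    ∫⁻ y in {y | a ≤ dist x y ∧ dist x y < 2*a},
        ENNReal.ofReal (f y) * ENNReal.ofReal (dist x y ^ (s - (n:ℝ))) ≤
      ENNReal.ofReal (a ^ (s - (n:ℝ))) * ∫⁻ y in ball x (2*a), ENNReal.ofReal (f y) := by
  have hmeas : MeasurableSet {y : Euc n | a ≤ dist x y ∧ dist x y < 2*a} := by
    apply MeasurableSet.inter
    · exact measurableSet_le measurable_const (measurable_const.dist measurable_id)
    · exact measurableSet_lt (measurable_const.dist measurable_id) measurable_const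
  calc ∫⁻ y in {y | a ≤ dist x y ∧ dist x y < 2*a},
        ENNReal.ofReal (f y) * ENNReal.ofReal (dist x y ^ (s - (n:ℝ)))
      ≤ ∫⁻ y in {y | a ≤ dist x y ∧ dist x y < 2*a},
        ENNReal.ofReal (a ^ (s - (n:ℝ))) * ENNReal.ofReal (f y) := by
        refine setLIntegral_mono' hmeas fun y hy => ?_
        rw [mul_comm]
        exact mul_le_mul_left (ENNReal.ofReal_le_ofReal
          (Real.rpow_le_rpow_of_nonpos ha hy.1 hs)) _
    _ ≤ ∫⁻ y in ball x (2*a), ENNReal.ofReal (a ^ (s - (n:ℝ))) * ENNReal.ofReal (f y) := by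
        refine lintegral_mono_set fun y hy => ?_
        rw [mem_ball, dist_comm]; exact hy.2
    _ = ENNReal.ofReal (a ^ (s - (n:ℝ))) * ∫⁻ y in ball x (2*a), ENNReal.ofReal (f y) :=
        lintegral_const_mul _ hf.ennreal_ofReal

-- geometric sum
lemma tsum_ofReal_geom {D w : ℝ} (hD : 0 ≤ D) (h0 : 0 ≤ w) (h1 : w < 1) :
    ∑' k : ℕ, ENNReal.ofReal (D * w^k) ≤ ENNReal.ofReal (D * (1-w)⁻¹) := by
  rw [← ENNReal.ofReal_tsum_of_nonneg (fun k => by positivity)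
    ((summable_geometric_of_lt_one h0 h1).mul_left D)]
  rw [tsum_mul_left, tsum_geometric_of_lt_one h0 h1]

lemma eq_of_log_eq {x y : ℝ} (hx : 0 < x) (hy : 0 < y) (h : Real.log x = Real.log y) :
    x = y := by rw [← Real.exp_log hx, ← Real.exp_log hy, h]

set_option maxHeartbeats 1000000 in
lemma step1 (n : ℕ) (s p lam : ℝ) (hp1 : 1 < p) (hsp0 : 0 < s * p)
    (hspn : s * p < n) (hlam1 : (n : ℝ) - s * p < lam) :
    ∃ c c₁ : ℝ, 0 < c ∧ 0 < c₁ ∧ ∀ f : Euc n → ℝ, Measurable f → (∀ x, 0 ≤ f x) →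
    ∀ r : ℝ, 0 < r → ∀ x : Euc n,
    (1 ≤ ∫⁻ y, ENNReal.ofReal (f y) * ENNReal.ofReal (dist x y ^ (s - (n : ℝ)))) →
    ((∫⁻ y, ENNReal.ofReal (f y ^ p)) < ENNReal.ofReal (c * r ^ ((n : ℝ) - s * p))) →
    ∃ k : ℕ, ENNReal.ofReal (c₁ * (r / 2 ^ k) ^ lam * r ^ ((n : ℝ) - s * p - lam)) ≤
      ∫⁻ y in ball x (r / 2 ^ k), ENNReal.ofReal (f y ^ p) := by
  have hp0 : 0 < p := lt_trans one_pos hp1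
  have hs0 : 0 < s := by nlinarith
  have hn0 : (0:ℝ) < n := lt_trans hsp0 hspn
  have hsn : s - (n:ℝ) < 0 := by nlinarith
  set q : ℝ := p / (p - 1) with hqdef
  have hpq : p.HolderConjugate q := Real.HolderConjugate.conjExponent hp1
  have hq0 : 0 < q := hpq.symm.pos
  have h1p : 0 < 1/p := by positivity
  have h1q : 0 < 1/q := by positivity
  haveI : Nontrivial (Euc n) := by
    have : 0 < n := by exact_mod_cast hn0
    have : Nonempty (Fin n) := ⟨⟨0, this⟩⟩
    infer_instance
  set V₀ : ℝ := (volume (ball (0 : Euc n) 1)).toReal with hV₀def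
  have hVlt : volume (ball (0 : Euc n) 1) ≠ ⊤ := measure_ball_lt_top.ne
  have hV₀pos : 0 < V₀ :=
    ENNReal.toReal_pos (measure_ball_pos volume 0 one_pos).ne' hVlt
  have hVeq : volume (ball (0 : Euc n) 1) = ENNReal.ofReal V₀ :=
    (ENNReal.ofReal_toReal hVlt).symm
  set δ : ℝ := (s*p - n + lam)/p with hδdef
  have hδ0 : 0 < δ := by
    apply div_pos _ hp0; linarith
  set β : ℝ := (n:ℝ)/p - s with hβdef
  have hβ0 : 0 < β := by
    have : (n:ℝ)/p - s = (n - s*p)/p := by field_simp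
    rw [hβdef, this]; apply div_pos _ hp0; linarith

  set w₁ : ℝ := (2:ℝ)⁻¹ ^ δ with hw₁def
  have hw₁0 : 0 < w₁ := Real.rpow_pos_of_pos (by norm_num) _
  have hw₁1 : w₁ < 1 := Real.rpow_lt_one (by norm_num) (by norm_num) hδ0
  set w₂ : ℝ := (2:ℝ)⁻¹ ^ β with hw₂def
  have hw₂0 : 0 < w₂ := Real.rpow_pos_of_pos (by norm_num) _
  have hw₂1 : w₂ < 1 := Real.rpow_lt_one (by norm_num) (by norm_num) hβ0
  set Wr : ℝ := V₀ ^ (1/q) with hWrdef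
  have hWr0 : 0 < Wr := Real.rpow_pos_of_pos hV₀pos _
  set E₁ : ℝ := (2:ℝ)^((n:ℝ)-s) * (1 - w₁)⁻¹ with hE₁def
  have hE₁0 : 0 < E₁ := by
    apply mul_pos (Real.rpow_pos_of_pos (by norm_num) _)
    rw [inv_pos]; linarith
  set E₂ : ℝ := (2:ℝ)^((n:ℝ)/q) * (1 - w₂)⁻¹ with hE₂def
  have hE₂0 : 0 < E₂ := by
    apply mul_pos (Real.rpow_pos_of_pos (by norm_num) _)
    rw [inv_pos]; linarith
  set c₁ : ℝ := ((4*(Wr*E₁+1))⁻¹) ^ p with hc₁def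
  have hc₁0 : 0 < c₁ := Real.rpow_pos_of_pos (by positivity) _
  set c : ℝ := ((4*(Wr*E₂+1))⁻¹) ^ p with hcdef
  have hc0 : 0 < c := Real.rpow_pos_of_pos (by positivity) _
  have hc₁p : c₁ ^ (1/p) = (4*(Wr*E₁+1))⁻¹ := by
    rw [hc₁def, ← Real.rpow_mul (by positivity), mul_one_div, div_self hp0.ne',
      Real.rpow_one]
  have hcp : c ^ (1/p) = (4*(Wr*E₂+1))⁻¹ := by
    rw [hcdef, ← Real.rpow_mul (by positivity), mul_one_div, div_self hp0.ne',
      Real.rpow_one]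
  set D₁ : ℝ := (2:ℝ)^((n:ℝ)-s) * Wr * c₁^(1/p) with hD₁def
  set D₂ : ℝ := (2:ℝ)^((n:ℝ)/q) * Wr * c^(1/p) with hD₂def
  have hD₁0 : 0 < D₁ :=
    mul_pos (mul_pos (Real.rpow_pos_of_pos two_pos _) hWr0) (Real.rpow_pos_of_pos hc₁0 _)
  have hD₂0 : 0 < D₂ :=
    mul_pos (mul_pos (Real.rpow_pos_of_pos two_pos _) hWr0) (Real.rpow_pos_of_pos hc0 _)
  have hquarter₁ : D₁ * (1 - w₁)⁻¹ ≤ 4⁻¹ := by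
    have h1 : (0:ℝ) < 1 - w₁ := by linarith
    have heq : D₁ * (1 - w₁)⁻¹ = (Wr * E₁) * (4*(Wr*E₁+1))⁻¹ := by
      rw [hD₁def, hc₁p, hE₁def]; ring
    have hx : 0 < Wr * E₁ := mul_pos hWr0 hE₁0
    rw [heq]
    calc (Wr * E₁) * (4*(Wr*E₁+1))⁻¹ ≤ (Wr*E₁+1) * (4*(Wr*E₁+1))⁻¹ := by
          gcongr; linarith
      _ = 4⁻¹ := by field_simp
  have hquarter₂ : D₂ * (1 - w₂)⁻¹ ≤ 4⁻¹ := by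
    have h1 : (0:ℝ) < 1 - w₂ := by linarith
    have heq : D₂ * (1 - w₂)⁻¹ = (Wr * E₂) * (4*(Wr*E₂+1))⁻¹ := by
      rw [hD₂def, hcp, hE₂def]; ring
    have hx : 0 < Wr * E₂ := mul_pos hWr0 hE₂0
    rw [heq]
    calc (Wr * E₂) * (4*(Wr*E₂+1))⁻¹ ≤ (Wr*E₂+1) * (4*(Wr*E₂+1))⁻¹ := by
          gcongr; linarith
      _ = 4⁻¹ := by field_simp
  refine ⟨c, c₁, hc0, hc₁0, ?_⟩
  intro f hf hf0 r hr x hpot hA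
  by_contra hcon
  push_neg at hcon
  have hvol : ∀ t : ℝ, 0 < t → volume (ball x t) = ENNReal.ofReal (t ^ ((n:ℝ)) * V₀) := by
    intro t ht
    rw [Measure.addHaar_ball volume x ht.le, finrank_euclideanSpace_fin, hVeq,
      ← ENNReal.ofReal_mul (by positivity), ← Real.rpow_natCast t n]
  have hball : ∀ a M : ℝ, 0 < a → 0 ≤ M →
      (∫⁻ y in ball x (2*a), ENNReal.ofReal (f y ^ p)) ≤ ENNReal.ofReal M →
      (∫⁻ y in {y | a ≤ dist x y ∧ dist x y < 2*a},
          ENNReal.ofReal (f y) * ENNReal.ofReal (dist x y ^ (s-(n:ℝ)))) ≤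
        ENNReal.ofReal (a^(s-(n:ℝ)) * (M^(1/p) * ((2*a)^((n:ℝ)) * V₀)^(1/q))) := by
    intro a M ha hM hint
    calc (∫⁻ y in {y | a ≤ dist x y ∧ dist x y < 2*a},
          ENNReal.ofReal (f y) * ENNReal.ofReal (dist x y ^ (s-(n:ℝ))))
        ≤ ENNReal.ofReal (a ^ (s-(n:ℝ))) * ∫⁻ y in ball x (2*a), ENNReal.ofReal (f y) :=
          annulus_bound hsn.le hf x ha
      _ ≤ ENNReal.ofReal (a ^ (s-(n:ℝ))) *
          ((∫⁻ y in ball x (2*a), ENNReal.ofReal (f y ^ p)) ^ (1/p) *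
            (volume (ball x (2*a))) ^ (1/q)) :=
          mul_le_mul_right (holder_set hpq hf hf0 _) _
      _ ≤ ENNReal.ofReal (a ^ (s-(n:ℝ))) *
          ((ENNReal.ofReal M) ^ (1/p) * (ENNReal.ofReal ((2*a)^((n:ℝ)) * V₀)) ^ (1/q)) := by
          rw [hvol _ (by positivity)]
          exact mul_le_mul_right (mul_le_mul'
            (ENNReal.rpow_le_rpow hint h1p.le) le_rfl) _
      _ = ENNReal.ofReal (a^(s-(n:ℝ)) * (M^(1/p) * ((2*a)^((n:ℝ)) * V₀)^(1/q))) := by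
          rw [ENNReal.ofReal_rpow_of_nonneg hM h1p.le,
            ENNReal.ofReal_rpow_of_nonneg (by positivity) h1q.le,
            ← ENNReal.ofReal_mul (by positivity), ← ENNReal.ofReal_mul (by positivity)]
  set NearAnn : ℕ → Set (Euc n) :=
    fun k => {y | r/2^(k+1) ≤ dist x y ∧ dist x y < 2*(r/2^(k+1))} with hNA
  set FarAnn : ℕ → Set (Euc n) :=
    fun k => {y | r*2^k ≤ dist x y ∧ dist x y < 2*(r*2^k)} with hFA
  have hTN : ∀ k : ℕ, (∫⁻ y in NearAnn k,
      ENNReal.ofReal (f y) * ENNReal.ofReal (dist x y ^ (s-(n:ℝ)))) ≤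
      ENNReal.ofReal (D₁ * w₁^k) := by
    intro k
    have ha : (0:ℝ) < r/2^(k+1) := by positivity
    have hρ : (0:ℝ) < r/2^k := by positivity
    have h2a : 2*(r/2^(k+1)) = r/2^k := by
      rw [pow_succ]; field_simp
    have hM : 0 ≤ c₁ * (r/2^k)^lam * r^((n:ℝ)-s*p-lam) := by positivity
    have hint : (∫⁻ y in ball x (2*(r/2^(k+1))), ENNReal.ofReal (f y ^ p)) ≤
        ENNReal.ofReal (c₁ * (r/2^k)^lam * r^((n:ℝ)-s*p-lam)) := by
      rw [h2a]; exact (hcon k).le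
    refine (hball _ _ ha hM hint).trans (le_of_eq ?_)
    congr 1
    rw [h2a]
    apply eq_of_log_eq (by positivity) (by positivity)
    rw [hD₁def, hWrdef, hw₁def]
    simp (disch := positivity) only [Real.log_mul, Real.log_rpow, Real.log_div,
      Real.log_pow, Real.log_inv]
    rw [hδdef, hqdef]
    have hp1' : p - 1 ≠ 0 := by linarith
    field_simp
    push_cast
    ring
  have hTF : ∀ k : ℕ, (∫⁻ y in FarAnn k,
      ENNReal.ofReal (f y) * ENNReal.ofReal (dist x y ^ (s-(n:ℝ)))) ≤
      ENNReal.ofReal (D₂ * w₂^k) := by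
    intro k
    have ha : (0:ℝ) < r*2^k := by positivity
    have hM : 0 ≤ c * r^((n:ℝ)-s*p) := by positivity
    have hint : (∫⁻ y in ball x (2*(r*2^k)), ENNReal.ofReal (f y ^ p)) ≤
        ENNReal.ofReal (c * r^((n:ℝ)-s*p)) :=
      (setLIntegral_le_lintegral _ _).trans hA.le
    refine (hball _ _ ha hM hint).trans (le_of_eq ?_)
    congr 1
    apply eq_of_log_eq (by positivity) (by positivity)
    rw [hD₂def, hWrdef, hw₂def]
    simp (disch := positivity) only [Real.log_mul, Real.log_rpow, Real.log_div,
      Real.log_pow, Real.log_inv]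
    rw [hβdef, hqdef]
    have hp1' : p - 1 ≠ 0 := by linarith
    field_simp
    ring
  have hcover : (univ : Set (Euc n)) ⊆
      {x} ∪ ((⋃ k, NearAnn k) ∪ (⋃ k, FarAnn k)) := by
    intro y _
    rcases eq_or_ne y x with h | h
    · exact Or.inl (by simp [h])
    · have hd : 0 < dist x y := dist_pos.2 (Ne.symm h)
      refine Or.inr ?_
      rcases lt_or_ge (dist x y) r with hlt | hge
      · refine Or.inl ?_
        have hex : ∃ m : ℕ, r/2^(m+1) ≤ dist x y := by
          obtain ⟨m, hm⟩ := pow_unbounded_of_one_lt (r / dist x y) (one_lt_two (α := ℝ))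
          refine ⟨m, ?_⟩
          rw [div_le_iff₀ (by positivity)]
          rw [div_lt_iff₀ hd] at hm
          have h2m : (2:ℝ)^m ≤ 2^(m+1) := by
            apply pow_le_pow_right₀ <;> norm_num
          nlinarith [hd]
        refine mem_iUnion.2 ⟨Nat.find hex, Nat.find_spec hex, ?_⟩
        rcases Nat.eq_zero_or_pos (Nat.find hex) with h0 | hpos
        · rw [h0]; norm_num; linarith
        · obtain ⟨m, hm⟩ : ∃ m, Nat.find hex = m + 1 := ⟨_, (Nat.succ_pred_eq_of_pos hpos).symm⟩
          have := Nat.find_min hex (m := m) (by omega)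
          push_neg at this
          rw [hm]
          calc dist x y < r / 2^(m+1) := this
            _ = 2*(r/2^(m+1+1)) := by rw [pow_succ]; field_simp; ring
      · refine Or.inr ?_
        have hex : ∃ m : ℕ, dist x y < 2*(r*2^m) := by
          obtain ⟨m, hm⟩ := pow_unbounded_of_one_lt (dist x y / r) (one_lt_two (α := ℝ))
          refine ⟨m, ?_⟩
          rw [div_lt_iff₀ hr] at hm
          calc dist x y < 2^m * r := hm
            _ ≤ 2*(r*2^m) := by nlinarith [pow_pos (two_pos (α := ℝ)) m]
        refine mem_iUnion.2 ⟨Nat.find hex, ?_, Nat.find_spec hex⟩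
        rcases Nat.eq_zero_or_pos (Nat.find hex) with h0 | hpos
        · rw [h0]; norm_num; linarith
        · obtain ⟨m, hm⟩ : ∃ m, Nat.find hex = m + 1 := ⟨_, (Nat.succ_pred_eq_of_pos hpos).symm⟩
          have := Nat.find_min hex (m := m) (by omega)
          push_neg at this
          rw [hm]
          calc r * 2^(m+1) = 2*(r*2^m) := by ring
            _ ≤ dist x y := this
  have hfinal : (1:ℝ≥0∞) < 1 := by
    calc (1:ℝ≥0∞) ≤ ∫⁻ y, ENNReal.ofReal (f y) * ENNReal.ofReal (dist x y ^ (s - (n:ℝ))) :=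
          hpot
      _ = ∫⁻ y in univ, ENNReal.ofReal (f y) * ENNReal.ofReal (dist x y ^ (s - (n:ℝ))) :=
          (setLIntegral_univ _).symm
      _ ≤ ∫⁻ y in {x} ∪ ((⋃ k, NearAnn k) ∪ (⋃ k, FarAnn k)),
            ENNReal.ofReal (f y) * ENNReal.ofReal (dist x y ^ (s - (n:ℝ))) :=
          lintegral_mono_set hcover
      _ ≤ (∫⁻ y in {x}, ENNReal.ofReal (f y) * ENNReal.ofReal (dist x y ^ (s - (n:ℝ)))) +
          (∫⁻ y in (⋃ k, NearAnn k) ∪ (⋃ k, FarAnn k),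
            ENNReal.ofReal (f y) * ENNReal.ofReal (dist x y ^ (s - (n:ℝ)))) :=
          lintegral_union_le _ _ _
      _ ≤ (∫⁻ y in {x}, ENNReal.ofReal (f y) * ENNReal.ofReal (dist x y ^ (s - (n:ℝ)))) +
          ((∫⁻ y in ⋃ k, NearAnn k,
            ENNReal.ofReal (f y) * ENNReal.ofReal (dist x y ^ (s - (n:ℝ)))) +
           (∫⁻ y in ⋃ k, FarAnn k,
            ENNReal.ofReal (f y) * ENNReal.ofReal (dist x y ^ (s - (n:ℝ))))) :=
          add_le_add_right (lintegral_union_le _ _ _) _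
      _ ≤ 0 + ((∑' k, ∫⁻ y in NearAnn k,
            ENNReal.ofReal (f y) * ENNReal.ofReal (dist x y ^ (s - (n:ℝ)))) +
           (∑' k, ∫⁻ y in FarAnn k,
            ENNReal.ofReal (f y) * ENNReal.ofReal (dist x y ^ (s - (n:ℝ))))) := by
          gcongr
          · exact le_of_eq (setLIntegral_measure_zero _ _ (measure_singleton x))
          · exact lintegral_iUnion_le _ _
          · exact lintegral_iUnion_le _ _
      _ ≤ 0 + (ENNReal.ofReal (D₁ * (1-w₁)⁻¹) + ENNReal.ofReal (D₂ * (1-w₂)⁻¹)) := by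
          gcongr
          · exact (ENNReal.tsum_le_tsum hTN).trans (tsum_ofReal_geom hD₁0.le hw₁0.le hw₁1)
          · exact (ENNReal.tsum_le_tsum hTF).trans (tsum_ofReal_geom hD₂0.le hw₂0.le hw₂1)
      _ ≤ 0 + (ENNReal.ofReal 4⁻¹ + ENNReal.ofReal 4⁻¹) :=
          add_le_add_right (add_le_add (ENNReal.ofReal_le_ofReal hquarter₁)
            (ENNReal.ofReal_le_ofReal hquarter₂)) 0
      _ < 1 := by
          rw [zero_add, ← ENNReal.ofReal_add (by norm_num) (by norm_num)]
          exact ENNReal.ofReal_lt_one.2 (by norm_num)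
  exact absurd hfinal (lt_irrefl _)

/-- Let `1<p<∞`, `0<sp<n`, `n-sp<λ≤n`, `σ>0`. Then there is a fatness
constant `σ' > 0`, depending only on `σ, λ, n, s, p`, such that every Borel set
`E ⊆ ℝⁿ` with `H^λ_∞(B(x,r) ∩ E) ≥ σ r^λ` for all `x ∈ E`, `r > 0`, satisfies
`R_{s,p}(B(x,r) ∩ E) ≥ σ' r^{n-sp}` for all `x ∈ E`, `r > 0`. -/
theorem statement6 (n : ℕ) (s p lam σ : ℝ) (hp1 : 1 < p) (hsp0 : 0 < s * p)
    (hspn : s * p < n) (hlam1 : (n : ℝ) - s * p < lam) (hlam2 : lam ≤ n) (hσ : 0 < σ) :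
    ∃ σ' : ℝ, 0 < σ' ∧ ∀ E : Set (Euc n), MeasurableSet E →
      (∀ x ∈ E, ∀ r : ℝ, 0 < r →
        ENNReal.ofReal (σ * r ^ lam) ≤ hContent n lam (Metric.ball x r ∩ E)) →
      ∀ x ∈ E, ∀ r : ℝ, 0 < r →
        ENNReal.ofReal (σ' * r ^ ((n : ℝ) - s * p)) ≤
          rieszCap n s p (Metric.ball x r ∩ E) := by
  classical
  obtain ⟨c, c₁, hc0, hc₁0, H1⟩ := step1 n s p lam hp1 hsp0 hspn hlam1
  have hp0 : 0 < p := one_pos.trans hp1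
  have hn0 : (0:ℝ) < n := hsp0.trans hspn
  have hnsp : (0:ℝ) < (n:ℝ) - s * p := by linarith
  have hlam0 : 0 < lam := by linarith
  set w₃ : ℝ := (2:ℝ)⁻¹ ^ lam with hw₃def
  have hw₃0 : 0 < w₃ := Real.rpow_pos_of_pos (by norm_num) _
  have hw₃1 : w₃ < 1 := Real.rpow_lt_one (by norm_num) (by norm_num) hlam0
  have h6 : (0:ℝ) < (6:ℝ)^lam := Real.rpow_pos_of_pos (by norm_num) _
  set c₂ : ℝ := c₁ * ((6:ℝ)^lam)⁻¹ * (σ/2) with hc₂def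
  have hc₂0 : 0 < c₂ := by positivity
  refine ⟨min c c₂, lt_min hc0 hc₂0, ?_⟩
  intro E hE hcont x₀ hx₀ r hr
  have hrpow : (0:ℝ) ≤ r ^ ((n:ℝ) - s*p) := (Real.rpow_pos_of_pos hr _).le
  rw [rieszCap]
  refine le_iInf fun f => le_iInf fun hf => le_iInf fun hf0 => le_iInf fun hpot => ?_
  by_contra hlt
  push_neg at hlt
  have hAc : (∫⁻ y, ENNReal.ofReal (f y ^ p)) < ENNReal.ofReal (c * r ^ ((n:ℝ) - s*p)) :=
    lt_of_lt_of_le hlt (ENNReal.ofReal_le_ofReal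
      (mul_le_mul_of_nonneg_right (min_le_left c c₂) hrpow))
  have hstep : ∀ y ∈ ball x₀ r ∩ E, ∃ k : ℕ,
      ENNReal.ofReal (c₁ * (r / 2 ^ k) ^ lam * r ^ ((n:ℝ) - s*p - lam)) ≤
        ∫⁻ z in ball y (r / 2 ^ k), ENNReal.ofReal (f z ^ p) :=
    fun y hy => H1 f hf hf0 r hr y (hpot y hy) hAc
  choose! kk hkk using hstep
  set ρ : Euc n → ℝ := fun y => r / 2 ^ (kk y) with hρdef
  have hρ0 : ∀ y, 0 < ρ y := fun y => by rw [hρdef]; positivity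
  have hρr : ∀ y, ρ y ≤ r := fun y => by
    rw [hρdef]
    exact div_le_self hr.le (one_le_pow₀ one_le_two)
  obtain ⟨u, huE, hdisj, hcov⟩ :=
    Vitali.exists_disjoint_subfamily_covering_enlargement_closedBall
      (ball x₀ r ∩ E) id ρ r (fun y _ => hρr y) 4 (by norm_num)
  have hucnt : u.Countable := by
    apply hdisj.countable_of_nonempty_interior
    intro b hb
    rw [id, interior_closedBall _ (hρ0 b).ne']
    exact ⟨b, mem_ball_self (hρ0 b)⟩
  haveI := hucnt.to_subtype
  have hcov6 : ball x₀ r ∩ E ⊆ ⋃ b ∈ u, ball b (6 * ρ b) := by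
    intro a ha
    obtain ⟨b, hbu, hsub⟩ := hcov a ha
    refine mem_iUnion₂.2 ⟨b, hbu, ?_⟩
    have h1 : a ∈ closedBall (id a) (ρ (id a)) := mem_closedBall_self (hρ0 a).le
    have h2 := hsub h1
    simp only [id] at h2 ⊢
    rw [mem_closedBall] at h2
    rw [mem_ball]
    have := hρ0 b
    nlinarith
  obtain ⟨emb, hemb⟩ := Set.countable_iff_exists_injective.1 hucnt
  set η : ℝ := (σ * r ^ lam / 2 * (1 - w₃)) ^ (1/lam) with hηdef
  have hbase : (0:ℝ) < σ * r ^ lam / 2 * (1 - w₃) := by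
    have h1 : (0:ℝ) < 1 - w₃ := by linarith
    have h2 : (0:ℝ) < r ^ lam := Real.rpow_pos_of_pos hr _
    positivity
  have hη0 : 0 < η := Real.rpow_pos_of_pos hbase _
  have hη_lam : η ^ lam = σ * r ^ lam / 2 * (1 - w₃) := by
    rw [hηdef, ← Real.rpow_mul hbase.le, one_div, inv_mul_cancel₀ hlam0.ne', Real.rpow_one]
  have hterm : ∀ i : ℕ, (η * 2⁻¹ ^ i) ^ lam = η ^ lam * w₃ ^ i := by
    intro i
    apply eq_of_log_eq (by positivity) (by positivity)
    rw [hw₃def]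
    simp (disch := positivity) only [Real.log_mul, Real.log_rpow, Real.log_pow, Real.log_inv]
    ring
  have hηsum : ∑' i : ℕ, ENNReal.ofReal ((η * 2⁻¹ ^ i) ^ lam) ≤
      ENNReal.ofReal (σ * r ^ lam / 2) := by
    calc ∑' i : ℕ, ENNReal.ofReal ((η * 2⁻¹ ^ i) ^ lam)
        = ∑' i : ℕ, ENNReal.ofReal (η ^ lam * w₃ ^ i) :=
          tsum_congr fun i => by rw [hterm i]
      _ ≤ ENNReal.ofReal (η ^ lam * (1 - w₃)⁻¹) :=
          tsum_ofReal_geom (by positivity) hw₃0.le hw₃1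
      _ = ENNReal.ofReal (σ * r ^ lam / 2) := by
          rw [hη_lam]
          congr 1
          have h1 : (1:ℝ) - w₃ ≠ 0 := by linarith
          field_simp
  set covfn : ℕ → Euc n × ℝ := fun i =>
    if h : ∃ b : ↥u, emb b = i then ((h.choose : Euc n), 6 * ρ h.choose)
    else (x₀, η * 2⁻¹ ^ i) with hcovfn
  have hcovval : ∀ b : ↥u, covfn (emb b) = ((b : Euc n), 6 * ρ b) := by
    intro b
    have hex : ∃ b' : ↥u, emb b' = emb b := ⟨b, rfl⟩
    rw [hcovfn]
    dsimp only
    rw [dif_pos hex, hemb hex.choose_spec]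
  have hcovpos : ∀ i, 0 < (covfn i).2 := by
    intro i
    rw [hcovfn]
    dsimp only
    split
    · next h =>
        dsimp only
        have := hρ0 h.choose
        positivity
    · dsimp only
      positivity
  have hcovers : ball x₀ r ∩ E ⊆ ⋃ i, ball (covfn i).1 (covfn i).2 := by
    intro a ha
    obtain ⟨b, hbu, hab⟩ := mem_iUnion₂.1 (hcov6 ha)
    refine mem_iUnion.2 ⟨emb ⟨b, hbu⟩, ?_⟩
    rw [hcovval ⟨b, hbu⟩]
    exact hab
  have hle : hContent n lam (ball x₀ r ∩ E) ≤ ∑' i, ENNReal.ofReal ((covfn i).2 ^ lam) := by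
    rw [hContent]
    exact iInf_le_of_le covfn (iInf_le_of_le hcovpos (iInf_le _ hcovers))
  have hsum6 : ENNReal.ofReal (σ * r ^ lam) ≤ ∑' i, ENNReal.ofReal ((covfn i).2 ^ lam) :=
    (hcont x₀ hx₀ r hr).trans hle
  have hsplit : ∑' i, ENNReal.ofReal ((covfn i).2 ^ lam) ≤
      (∑' b : ↥u, ENNReal.ofReal ((6 * ρ b) ^ lam)) + ENNReal.ofReal (σ * r ^ lam / 2) := by
    have h1 : (∑' i : ↥(Set.range emb), ENNReal.ofReal ((covfn i).2 ^ lam)) +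
        (∑' i : ↥(Set.range emb)ᶜ, ENNReal.ofReal ((covfn i).2 ^ lam)) =
        ∑' i, ENNReal.ofReal ((covfn i).2 ^ lam) :=
      Summable.tsum_add_tsum_compl (f := fun i => ENNReal.ofReal ((covfn i).2 ^ lam))
        (s := Set.range emb) ENNReal.summable ENNReal.summable
    rw [← h1]
    have h2 : (∑' i : ↥(Set.range emb), ENNReal.ofReal ((covfn i).2 ^ lam)) =
        ∑' b : ↥u, ENNReal.ofReal ((6 * ρ b) ^ lam) := by
      rw [← (Equiv.ofInjective emb hemb).tsum_eq
        (fun i : ↥(Set.range emb) => ENNReal.ofReal ((covfn i).2 ^ lam))]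
      refine tsum_congr fun b => ?_
      have : ((Equiv.ofInjective emb hemb) b : ℕ) = emb b := rfl
      rw [this, hcovval b]
    have h3 : (∑' i : ↥(Set.range emb)ᶜ, ENNReal.ofReal ((covfn i).2 ^ lam)) ≤
        ENNReal.ofReal (σ * r ^ lam / 2) := by
      have h4 : ∀ i : ↥(Set.range emb)ᶜ, ENNReal.ofReal ((covfn i).2 ^ lam) =
          ENNReal.ofReal ((η * 2⁻¹ ^ (i:ℕ)) ^ lam) := by
        intro i
        have hni : ¬∃ b : ↥u, emb b = (i:ℕ) := by
          intro ⟨b, hb⟩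
          exact i.2 ⟨b, hb⟩
        rw [hcovfn]
        dsimp only
        rw [dif_neg hni]
      calc (∑' i : ↥(Set.range emb)ᶜ, ENNReal.ofReal ((covfn i).2 ^ lam))
          = ∑' i : ↥(Set.range emb)ᶜ, ENNReal.ofReal ((η * 2⁻¹ ^ (i:ℕ)) ^ lam) :=
            tsum_congr h4
        _ ≤ ∑' i : ℕ, ENNReal.ofReal ((η * 2⁻¹ ^ i) ^ lam) :=
            ENNReal.tsum_comp_le_tsum_of_injective Subtype.val_injective _
        _ ≤ ENNReal.ofReal (σ * r ^ lam / 2) := hηsum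
    rw [h2]
    exact add_le_add_right h3 _
  have hS : ENNReal.ofReal (σ * r ^ lam / 2) ≤ ∑' b : ↥u, ENNReal.ofReal ((6 * ρ b) ^ lam) := by
    have h2 : ENNReal.ofReal (σ * r ^ lam) =
        ENNReal.ofReal (σ * r ^ lam / 2) + ENNReal.ofReal (σ * r ^ lam / 2) := by
      rw [← ENNReal.ofReal_add (by positivity) (by positivity)]
      ring_nf
    have h3 := (hsum6.trans hsplit)
    rw [h2] at h3
    exact (ENNReal.add_le_add_iff_right ENNReal.ofReal_ne_top).1 h3
  have hint : ∑' b : ↥u, (∫⁻ z in closedBall (b : Euc n) (ρ b), ENNReal.ofReal (f z ^ p)) ≤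
      ∫⁻ z, ENNReal.ofReal (f z ^ p) := by
    have hd : Pairwise (Function.onFun Disjoint
        (fun b : ↥u => closedBall (b : Euc n) (ρ b))) := by
      intro b1 b2 hne
      exact hdisj b1.2 b2.2 (Subtype.coe_ne_coe.2 hne)
    rw [← lintegral_iUnion (fun b => measurableSet_closedBall) hd]
    exact setLIntegral_le_lintegral _ _
  have hperball : ∀ b : ↥u,
      ENNReal.ofReal (c₁ * ((6:ℝ)^lam)⁻¹ * r ^ ((n:ℝ)-s*p-lam) * (6 * ρ b) ^ lam) ≤
      ∫⁻ z in closedBall (b : Euc n) (ρ b), ENNReal.ofReal (f z ^ p) := by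
    intro b
    have hb' : (b : Euc n) ∈ ball x₀ r ∩ E := huE b.2
    have hmain := hkk (b : Euc n) hb'
    refine le_trans (le_of_eq ?_) (hmain.trans (lintegral_mono_set ball_subset_closedBall))
    congr 1
    have hexp : (6 * ρ (b : Euc n)) ^ lam = (6:ℝ)^lam * (ρ (b:Euc n)) ^ lam :=
      Real.mul_rpow (by norm_num) (hρ0 _).le
    rw [hexp, hρdef]
    field_simp
  have hlow : ENNReal.ofReal (c₂ * r ^ ((n:ℝ) - s*p)) ≤ ∫⁻ z, ENNReal.ofReal (f z ^ p) := by
    have hrsplit : r ^ ((n:ℝ) - s*p) = r ^ ((n:ℝ) - s*p - lam) * r ^ lam := by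
      rw [← Real.rpow_add hr]
      ring_nf
    calc ENNReal.ofReal (c₂ * r ^ ((n:ℝ) - s*p))
        = ENNReal.ofReal (c₁ * ((6:ℝ)^lam)⁻¹ * r ^ ((n:ℝ)-s*p-lam)) *
            ENNReal.ofReal (σ * r ^ lam / 2) := by
          rw [← ENNReal.ofReal_mul (by positivity)]
          congr 1
          rw [hc₂def, hrsplit]
          ring
      _ ≤ ENNReal.ofReal (c₁ * ((6:ℝ)^lam)⁻¹ * r ^ ((n:ℝ)-s*p-lam)) *
            ∑' b : ↥u, ENNReal.ofReal ((6 * ρ b) ^ lam) := mul_le_mul_right hS _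
      _ = ∑' b : ↥u, ENNReal.ofReal (c₁ * ((6:ℝ)^lam)⁻¹ * r ^ ((n:ℝ)-s*p-lam)) *
            ENNReal.ofReal ((6 * ρ b) ^ lam) := ENNReal.tsum_mul_left.symm
      _ = ∑' b : ↥u, ENNReal.ofReal (c₁ * ((6:ℝ)^lam)⁻¹ * r ^ ((n:ℝ)-s*p-lam) *
            (6 * ρ b) ^ lam) :=
          tsum_congr fun b => (ENNReal.ofReal_mul (by positivity)).symm
      _ ≤ ∑' b : ↥u, (∫⁻ z in closedBall (b : Euc n) (ρ b), ENNReal.ofReal (f z ^ p)) :=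
          ENNReal.tsum_le_tsum hperball
      _ ≤ ∫⁻ z, ENNReal.ofReal (f z ^ p) := hint
  have hfin : ENNReal.ofReal (min c c₂ * r ^ ((n:ℝ)-s*p)) ≤ ∫⁻ z, ENNReal.ofReal (f z ^ p) :=
    le_trans (ENNReal.ofReal_le_ofReal
      (mul_le_mul_of_nonneg_right (min_le_right c c₂) hrpow)) hlow
  exact absurd (lt_of_le_of_lt hfin hlt) (lt_irrefl _)

end
end

section
/- Let G ⊊ ℝⁿ be an open set, n ≥ 2, let 1<κ<∞ and L ≥ 1, and let W be a family of closed axis-parallel cubes with pairwise disjoint interiors whose union is G (e.g. a Whitney decomposition of G). Then there is a constant C>0, depending only on n and κ, such that for every g ∈ L^κ(ℝⁿ×ℝⁿ): Σ_{Q∈W} |Q|² ( ⨍_{LQ} ⨍_{LQ} |g(x,y)| dy dx )^κ ≤ C ∫_{ℝⁿ} ∫_{ℝⁿ} |g(x,y)|^κ dy dx, where ⨍ denotes the integral average and LQ is the cube concentric with Q of side length L·ℓ(Q). -/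
open MeasureTheory Metric Set
open scoped ENNReal NNReal Topology

noncomputable section

lemma two_rpow_ne_top (x : ℝ) : (2:ℝ≥0∞) ^ x ≠ ∞ := by
  simp [ENNReal.rpow_eq_top_iff]
lemma two_rpow_ne_zero (x : ℝ) : (2:ℝ≥0∞) ^ x ≠ 0 := by
  simp [ENNReal.rpow_eq_zero_iff]
lemma two_rpow_pos (x : ℝ) : 0 < (2:ℝ≥0∞) ^ x :=
  pos_iff_ne_zero.2 (two_rpow_ne_zero x)
lemma two_rpow_add (x y : ℝ) : (2:ℝ≥0∞) ^ (x + y) = 2 ^ x * 2 ^ y :=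
  ENNReal.rpow_add x y (by norm_num) (by norm_num)
lemma two_rpow_two : (2:ℝ≥0∞) ^ (2:ℝ) = 4 := by
  rw [show (2:ℝ) = ((2:ℕ):ℝ) by norm_num, ENNReal.rpow_natCast]; norm_num

/-- pointwise dyadic geometric bound -/
lemma geom_bound {κ : ℝ} (hκ : 1 < κ) (y : ℝ≥0∞) :
    ∑' k : ℤ, (if (2:ℝ≥0∞) ^ ((k:ℝ) - 2) < y then (2:ℝ≥0∞) ^ ((k:ℝ) * (κ - 1)) * y else 0)
      ≤ (2:ℝ≥0∞) ^ (2 * (κ - 1)) * (1 - (2:ℝ≥0∞) ^ (1 - κ))⁻¹ * y ^ κ := by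
  have hq1 : (2:ℝ≥0∞) ^ (1 - κ) < 1 :=
    ENNReal.rpow_lt_one_of_one_lt_of_neg (by norm_num : (1:ℝ≥0∞) < 2) (by linarith)
  have hpref : (2:ℝ≥0∞) ^ (2 * (κ - 1)) * (1 - (2:ℝ≥0∞) ^ (1 - κ))⁻¹ ≠ 0 := by
    apply mul_ne_zero (two_rpow_ne_zero _)
    simp only [ne_eq, ENNReal.inv_eq_zero]
    exact ne_top_of_le_ne_top ENNReal.one_ne_top tsub_le_self
  rcases eq_or_ne y 0 with rfl | hy0
  · simp
  rcases eq_or_ne y ∞ with rfl | hytop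
  · rw [ENNReal.top_rpow_of_pos (by linarith), ENNReal.mul_top hpref]
    exact le_top
  -- main case
  have h4y0 : 4 * y ≠ 0 := by simp [hy0]
  have h4ytop : 4 * y ≠ ∞ := ENNReal.mul_ne_top (by norm_num) hytop
  obtain ⟨k₀, hk₀⟩ := ENNReal.exists_mem_Ico_zpow h4y0 h4ytop (by norm_num : (1:ℝ≥0∞) < 2) (by norm_num)
  have hk₀l : (2:ℝ≥0∞) ^ ((k₀:ℝ)) ≤ 4 * y := by
    rw [ENNReal.rpow_intCast]; exact hk₀.1
  have hk₀r : 4 * y < (2:ℝ≥0∞) ^ ((k₀:ℝ) + 1) := by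
    have h := hk₀.2
    rw [show ((k₀:ℝ) + 1) = ((k₀ + 1 : ℤ) : ℝ) by push_cast; ring, ENNReal.rpow_intCast]
    exact h
  have key : ∀ k : ℤ, (2:ℝ≥0∞) ^ ((k:ℝ) - 2) < y → k ≤ k₀ := by
    intro k hk
    by_contra hcon
    push_neg at hcon
    have h1 : (2:ℝ≥0∞) ^ ((k:ℝ)) < 4 * y := by
      have e : (2:ℝ≥0∞) ^ ((k:ℝ)) = 2 ^ (2:ℝ) * 2 ^ ((k:ℝ) - 2) := by
        rw [← two_rpow_add]; ring_nf
      rw [e, two_rpow_two]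
      exact ENNReal.mul_lt_mul_iff_right (by norm_num) (by norm_num) |>.2 hk
    have h3 : (2:ℝ≥0∞) ^ ((k₀:ℝ) + 1) ≤ 2 ^ ((k:ℝ)) := by
      apply ENNReal.rpow_le_rpow_of_exponent_le one_le_two
      have h5 : (k₀ + 1 : ℤ) ≤ k := hcon
      exact_mod_cast h5
    exact absurd (h1.trans (hk₀r.trans_le h3)) (lt_irrefl _)
  -- bound by the truncated geometric sum
  have step1 : ∑' k : ℤ, (if (2:ℝ≥0∞) ^ ((k:ℝ) - 2) < y then (2:ℝ≥0∞) ^ ((k:ℝ) * (κ - 1)) * y else 0)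
      ≤ ∑' k : ℤ, (if k ≤ k₀ then (2:ℝ≥0∞) ^ ((k:ℝ) * (κ - 1)) else 0) * y := by
    apply ENNReal.tsum_le_tsum
    intro k
    by_cases h : (2:ℝ≥0∞) ^ ((k:ℝ) - 2) < y
    · rw [if_pos h, if_pos (key k h)]
    · rw [if_neg h]; exact zero_le
  refine step1.trans ?_
  rw [ENNReal.tsum_mul_right]
  have hG : ∑' k : ℤ, (if k ≤ k₀ then (2:ℝ≥0∞) ^ ((k:ℝ) * (κ - 1)) else 0)
      = ∑' m : ℕ, (if (k₀ - (m:ℤ)) ≤ k₀ then (2:ℝ≥0∞) ^ ((Int.cast (k₀ - (m:ℤ)) : ℝ) * (κ - 1)) else 0) := by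
    have hinj : Function.Injective (fun m : ℕ => k₀ - (m:ℤ)) := by
      intro a b hab; simp only at hab; omega
    have hsupp : Function.support (fun k : ℤ => if k ≤ k₀ then (2:ℝ≥0∞) ^ ((k:ℝ) * (κ - 1)) else 0)
        ⊆ Set.range (fun m : ℕ => k₀ - (m:ℤ)) := by
      intro k hk
      have hk' : k ≤ k₀ := by
        by_contra hc; exact hk (by simp [if_neg hc])
      exact ⟨(k₀ - k).toNat, by simp; omega⟩
    exact (Function.Injective.tsum_eq hinj hsupp).symm
  rw [hG]
  have hterm : ∀ m : ℕ, (if (k₀ - (m:ℤ)) ≤ k₀ then (2:ℝ≥0∞) ^ ((Int.cast (k₀ - (m:ℤ)) : ℝ) * (κ - 1)) else 0)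
      = (2:ℝ≥0∞) ^ ((k₀:ℝ) * (κ - 1)) * ((2:ℝ≥0∞) ^ (1 - κ)) ^ (m:ℕ) := by
    intro m
    rw [if_pos (by omega)]
    rw [← ENNReal.rpow_natCast ((2:ℝ≥0∞) ^ (1-κ)) m, ← ENNReal.rpow_mul, ← two_rpow_add]
    congr 1
    push_cast
    ring
  rw [tsum_congr hterm, ENNReal.tsum_mul_left, ENNReal.tsum_geometric]
  -- now: 2^(k₀ (κ-1)) * (1 - q)⁻¹ * y ≤ 2^(2(κ-1)) * (1-q)⁻¹ * y^κ
  have hk₀y : (2:ℝ≥0∞) ^ ((k₀:ℝ) * (κ - 1)) ≤ (2:ℝ≥0∞) ^ (2*(κ-1)) * y ^ (κ - 1) := by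
    have h1 : (2:ℝ≥0∞) ^ ((k₀:ℝ) * (κ - 1)) = ((2:ℝ≥0∞) ^ ((k₀:ℝ))) ^ (κ - 1) := by
      rw [← ENNReal.rpow_mul]
    have h2 : (2:ℝ≥0∞) ^ (2*(κ-1)) * y ^ (κ - 1) = (4 * y) ^ (κ - 1) := by
      rw [ENNReal.mul_rpow_of_nonneg _ _ (by linarith : (0:ℝ) ≤ κ - 1)]
      congr 1
      rw [show (2:ℝ)*(κ-1) = 2*(κ-1) by ring, ← two_rpow_two, ← ENNReal.rpow_mul]
    rw [h1, h2]
    exact ENNReal.rpow_le_rpow hk₀l (by linarith)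
  calc (2:ℝ≥0∞) ^ ((k₀:ℝ) * (κ - 1)) * (1 - (2:ℝ≥0∞) ^ (1 - κ))⁻¹ * y
      ≤ ((2:ℝ≥0∞) ^ (2*(κ-1)) * y ^ (κ - 1)) * (1 - (2:ℝ≥0∞) ^ (1 - κ))⁻¹ * y := by
        gcongr
    _ = (2:ℝ≥0∞) ^ (2 * (κ - 1)) * (1 - (2:ℝ≥0∞) ^ (1 - κ))⁻¹ * (y ^ (κ-1) * y) := by
        ring
    _ = (2:ℝ≥0∞) ^ (2 * (κ - 1)) * (1 - (2:ℝ≥0∞) ^ (1 - κ))⁻¹ * y ^ κ := by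
        congr 1
        nth_rewrite 2 [← ENNReal.rpow_one y]
        rw [← ENNReal.rpow_add _ _ hy0 hytop]
        norm_num

lemma two_rpow_ne_top' (x : ℝ) : (2:ℝ≥0∞) ^ x ≠ ∞ := by
  simp [ENNReal.rpow_eq_top_iff]
lemma two_rpow_ne_zero' (x : ℝ) : (2:ℝ≥0∞) ^ x ≠ 0 := by
  simp [ENNReal.rpow_eq_zero_iff]

lemma layercake_discrete {κ : ℝ} (hκ : 1 < κ) (w A : ℕ → ℝ≥0∞) (hA : ∀ i, A i ≠ ∞) :
    ∑' i, w i * A i ^ κ ≤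
      ∑' k : ℤ, (2:ℝ≥0∞) ^ (((k:ℝ) + 1) * κ) *
        ∑' i, (if (2:ℝ≥0∞) ^ ((k:ℝ) - 1) < A i then w i else 0) := by
  have step : ∀ i, w i * A i ^ κ ≤
      ∑' k : ℤ, (2:ℝ≥0∞) ^ (((k:ℝ) + 1) * κ) *
        (if (2:ℝ≥0∞) ^ ((k:ℝ) - 1) < A i then w i else 0) := by
    intro i
    rcases eq_or_ne (A i) 0 with h0 | h0
    · rw [h0, ENNReal.zero_rpow_of_pos (by linarith), mul_zero]
      exact zero_le
    obtain ⟨k₁, hk₁⟩ := ENNReal.exists_mem_Ico_zpow h0 (hA i) (by norm_num : (1:ℝ≥0∞) < 2) (by norm_num)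
    have hl : (2:ℝ≥0∞) ^ ((k₁:ℝ)) ≤ A i := by rw [ENNReal.rpow_intCast]; exact hk₁.1
    have hr : A i < (2:ℝ≥0∞) ^ ((k₁:ℝ) + 1) := by
      have h := hk₁.2
      rw [show ((k₁:ℝ) + 1) = ((k₁ + 1 : ℤ) : ℝ) by push_cast; ring, ENNReal.rpow_intCast]
      exact h
    have hcond : (2:ℝ≥0∞) ^ ((k₁:ℝ) - 1) < A i := by
      refine lt_of_lt_of_le ?_ hl
      have h1 : ((k₁:ℝ) - 1) < (k₁:ℝ) := by linarith
      calc (2:ℝ≥0∞) ^ ((k₁:ℝ) - 1) = 2 ^ ((k₁:ℝ)) * 2 ^ (-1:ℝ) := by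
            rw [← ENNReal.rpow_add _ _ (by norm_num) (by norm_num)]; ring_nf
        _ < 2 ^ ((k₁:ℝ)) * 1 := by
            apply ENNReal.mul_lt_mul_iff_right (two_rpow_ne_zero' _) (two_rpow_ne_top' _) |>.2
            exact ENNReal.rpow_lt_one_of_one_lt_of_neg (by norm_num) (by norm_num)
        _ = 2 ^ ((k₁:ℝ)) := by rw [mul_one]
    have hbound : w i * A i ^ κ ≤ (2:ℝ≥0∞) ^ (((k₁:ℝ) + 1) * κ) *
        (if (2:ℝ≥0∞) ^ ((k₁:ℝ) - 1) < A i then w i else 0) := by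
      rw [if_pos hcond, mul_comm (w i)]
      apply mul_le_mul_left
      calc A i ^ κ ≤ ((2:ℝ≥0∞) ^ ((k₁:ℝ) + 1)) ^ κ := ENNReal.rpow_le_rpow hr.le (by linarith)
        _ = (2:ℝ≥0∞) ^ (((k₁:ℝ) + 1) * κ) := by rw [← ENNReal.rpow_mul]
    exact hbound.trans (ENNReal.le_tsum k₁)
  calc ∑' i, w i * A i ^ κ
      ≤ ∑' i, ∑' k : ℤ, (2:ℝ≥0∞) ^ (((k:ℝ) + 1) * κ) *
        (if (2:ℝ≥0∞) ^ ((k:ℝ) - 1) < A i then w i else 0) := ENNReal.tsum_le_tsum step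
    _ = ∑' k : ℤ, ∑' i, (2:ℝ≥0∞) ^ (((k:ℝ) + 1) * κ) *
        (if (2:ℝ≥0∞) ^ ((k:ℝ) - 1) < A i then w i else 0) := ENNReal.tsum_comm
    _ = ∑' k : ℤ, (2:ℝ≥0∞) ^ (((k:ℝ) + 1) * κ) *
        ∑' i, (if (2:ℝ≥0∞) ^ ((k:ℝ) - 1) < A i then w i else 0) := by
        exact tsum_congr fun k => ENNReal.tsum_mul_left

lemma vitali_weak {X : Type*} [MetricSpace X] [MeasurableSpace X] [OpensMeasurableSpace X]
    (μ : Measure X) (E D : ℕ → Set X) (p : ℕ → X) (rad : ℕ → ℝ)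
    (K c : ℝ≥0∞) (I : Set ℕ) (h : X → ℝ≥0∞) (R : ℝ)
    (hED : ∀ i, E i ⊆ D i) (hDB : ∀ i, D i ⊆ closedBall (p i) (rad i))
    (hB4 : ∀ i ∈ I, μ (closedBall (p i) (4 * rad i)) ≤ K * μ (D i))
    (hrad : ∀ i ∈ I, rad i ≤ R)
    (hIt : ∀ i ∈ I, μ (D i) ≤ c * ∫⁻ x in D i, h x ∂μ) :
    μ (⋃ i ∈ I, E i) ≤ K * c * ∫⁻ x, h x ∂μ := by
  obtain ⟨u, huI, hdisj, hcov⟩ :=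
    Vitali.exists_disjoint_subfamily_covering_enlargement_closedBall I p rad R hrad 4 (by norm_num)
  have hcover : (⋃ i ∈ I, E i) ⊆ ⋃ j ∈ u, closedBall (p j) (4 * rad j) := by
    intro x hx
    simp only [mem_iUnion] at hx ⊢
    obtain ⟨i, hi, hxi⟩ := hx
    obtain ⟨j, hj, hsub⟩ := hcov i hi
    exact ⟨j, hj, hsub (hDB i (hED i hxi))⟩
  have hcnt : u.Countable := (Set.to_countable I).mono huI
  calc μ (⋃ i ∈ I, E i) ≤ μ (⋃ j ∈ u, closedBall (p j) (4 * rad j)) := measure_mono hcover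
    _ ≤ ∑' j : u, μ (closedBall (p j) (4 * rad j)) := measure_biUnion_le μ hcnt _
    _ ≤ ∑' j : u, K * (c * ∫⁻ x in D j, h x ∂μ) := by
        refine ENNReal.tsum_le_tsum fun j => ?_
        exact le_trans (hB4 j (huI j.2)) (mul_le_mul_right (hIt j (huI j.2)) K)
    _ = K * c * ∑' j : u, ∫⁻ x in D j, h x ∂μ := by
        rw [ENNReal.tsum_mul_left, ENNReal.tsum_mul_left, mul_assoc]
    _ ≤ K * c * ∑' j : u, ∫⁻ x in closedBall (p j) (rad j), h x ∂μ := by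
        refine mul_le_mul_right (ENNReal.tsum_le_tsum fun j => ?_) _
        exact lintegral_mono_set (hDB j)
    _ = K * c * ∫⁻ x in ⋃ j ∈ u, closedBall (p j) (rad j), h x ∂μ := by
        congr 1
        exact (lintegral_biUnion₀ hcnt (fun j _ => measurableSet_closedBall.nullMeasurableSet)
          (fun a ha b hb hab => ((hdisj ha hb hab).aedisjoint)) h).symm
    _ ≤ K * c * ∫⁻ x, h x ∂μ := by
        refine mul_le_mul_right (lintegral_mono' Measure.restrict_le_self le_rfl) _

lemma cube_isClosed (n : ℕ) (z : Euc n) (s : ℝ) : IsClosed (cube n z s) := by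
  have : cube n z s = ⋂ i, {y : Euc n | |y i - z i| ≤ s / 2} := by
    ext y; simp [cube, Set.mem_iInter]
  rw [this]
  refine isClosed_iInter fun i => ?_
  have hc : Continuous fun y : Euc n => |y i - z i| :=
    ((continuous_apply i).comp (EuclideanSpace.equiv (Fin n) ℝ).continuous |>.sub
      continuous_const).abs
  exact isClosed_le hc continuous_const

lemma cube_measurable (n : ℕ) (z : Euc n) (s : ℝ) : MeasurableSet (cube n z s) :=
  (cube_isClosed n z s).measurableSet

lemma cube_eq_preimage (n : ℕ) (z : Euc n) (s : ℝ) :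
    cube n z s = (MeasurableEquiv.toLp 2 (Fin n → ℝ)).symm ⁻¹'
      (Set.univ.pi fun i => Set.Icc (z i - s/2) (z i + s/2)) := by
  ext y
  simp only [cube, Set.mem_setOf_eq, Set.mem_preimage, Set.mem_pi, Set.mem_univ, forall_true_left,
    Set.mem_Icc]
  simp only [show ∀ (y : Euc n) (i : Fin n), (MeasurableEquiv.toLp 2 (Fin n → ℝ)).symm y i = y i from fun _ _ => rfl]
  constructor
  · intro h i; have := h i; constructor <;> [linarith [abs_le.1 this |>.1]; linarith [abs_le.1 this |>.2]]
  · intro h i; rw [abs_le]; have := h i; constructor <;> [linarith [this.1]; linarith [this.2]]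

lemma volume_cube (n : ℕ) (z : Euc n) {s : ℝ} (hs : 0 ≤ s) :
    volume (cube n z s) = ENNReal.ofReal (s ^ n) := by
  rw [cube_eq_preimage]
  rw [(EuclideanSpace.volume_preserving_symm_measurableEquiv_toLp (Fin n)).measure_preimage
    (MeasurableSet.univ_pi fun i => measurableSet_Icc).nullMeasurableSet]
  rw [volume_pi_pi]
  simp only [Real.volume_Icc]
  have hb : ∀ x : Fin n, z x + s/2 - (z x - s/2) = s := fun x => by ring
  simp only [hb]
  rw [Finset.prod_const, Finset.card_univ, Fintype.card_fin, ← ENNReal.ofReal_pow hs]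

lemma interior_cube_volume (n : ℕ) (z : Euc n) {s : ℝ} (hs : 0 ≤ s) :
    volume (interior (cube n z s)) = ENNReal.ofReal (s ^ n) := by
  apply le_antisymm
  · rw [← volume_cube n z hs]; exact measure_mono interior_subset
  · -- open cube inside
    set O : Set (Euc n) := {y | ∀ i, |y i - z i| < s / 2} with hO
    have hOopen : IsOpen O := by
      have : O = ⋂ i, {y : Euc n | |y i - z i| < s / 2} := by ext y; simp [hO]
      rw [this]
      refine isOpen_iInter_of_finite fun i => ?_
      have hc : Continuous fun y : Euc n => |y i - z i| :=
        ((continuous_apply i).comp (EuclideanSpace.equiv (Fin n) ℝ).continuous |>.sub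
          continuous_const).abs
      exact isOpen_lt hc continuous_const
    have hOsub : O ⊆ cube n z s := fun y hy i => (hy i).le
    have hOvol : volume O = ENNReal.ofReal (s ^ n) := by
      have hOeq : O = (MeasurableEquiv.toLp 2 (Fin n → ℝ)).symm ⁻¹'
          (Set.univ.pi fun i => Set.Ioo (z i - s/2) (z i + s/2)) := by
        ext y
        simp only [hO, Set.mem_setOf_eq, Set.mem_preimage, Set.mem_pi, Set.mem_univ,
          forall_true_left, Set.mem_Ioo]
        simp only [show ∀ (y : Euc n) (i : Fin n), (MeasurableEquiv.toLp 2 (Fin n → ℝ)).symm y i = y i from fun _ _ => rfl]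
        constructor
        · intro h i; have := abs_lt.1 (h i); constructor <;> linarith [this.1, this.2]
        · intro h i; rw [abs_lt]; have := h i; constructor <;> linarith [this.1, this.2]
      rw [hOeq]
      rw [(EuclideanSpace.volume_preserving_symm_measurableEquiv_toLp (Fin n)).measure_preimage
        (MeasurableSet.univ_pi fun i => measurableSet_Ioo).nullMeasurableSet]
      rw [volume_pi_pi]
      simp only [Real.volume_Ioo]
      have hb : ∀ x : Fin n, z x + s/2 - (z x - s/2) = s := fun x => by ring
      simp only [hb]
      rw [Finset.prod_const, Finset.card_univ, Fintype.card_fin, ← ENNReal.ofReal_pow hs]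
    rw [← hOvol]
    exact measure_mono (hOopen.subset_interior_iff.2 hOsub)

lemma cube_subset_closedBall (n : ℕ) (z : Euc n) {s : ℝ} (hs : 0 ≤ s) :
    cube n z s ⊆ closedBall z (s * Real.sqrt n / 2) := by
  intro y hy
  rw [mem_closedBall, EuclideanSpace.dist_eq]
  have hsum : ∑ i, dist (y i) (z i) ^ 2 ≤ (n : ℝ) * (s/2)^2 := by
    have h1 : ∀ i : Fin n, dist (y i) (z i) ^ 2 ≤ (s/2)^2 := by
      intro i
      have h2 : |y i - z i| ≤ s/2 := hy i
      rw [Real.dist_eq]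
      apply sq_le_sq' _ h2
      linarith [abs_nonneg (y i - z i)]
    calc ∑ i, dist (y i) (z i) ^ 2 ≤ ∑ _i : Fin n, (s/2)^2 :=
          Finset.sum_le_sum fun i _ => h1 i
      _ = (n : ℝ) * (s/2)^2 := by
          rw [Finset.sum_const, Finset.card_univ, Fintype.card_fin, nsmul_eq_mul]
  calc Real.sqrt (∑ i, dist (y i) (z i) ^ 2) ≤ Real.sqrt ((n : ℝ) * (s/2)^2) :=
        Real.sqrt_le_sqrt hsum
    _ = s * Real.sqrt n / 2 := by
        rw [Real.sqrt_mul (Nat.cast_nonneg n), Real.sqrt_sq (by linarith : 0 ≤ s/2)]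
        ring

lemma closedBall_subset_cube (n : ℕ) (z : Euc n) {r : ℝ} (hr : 0 ≤ r) :
    closedBall z r ⊆ cube n z (2 * r) := by
  intro y hy i
  rw [mem_closedBall, EuclideanSpace.dist_eq] at hy
  have h1 : dist (y i) (z i) ^ 2 ≤ ∑ j, dist (y j) (z j) ^ 2 :=
    Finset.single_le_sum (f := fun j => dist (y j) (z j) ^ 2) (fun j _ => sq_nonneg _)
      (Finset.mem_univ i)
  have h2 : dist (y i) (z i) ≤ r := by
    have h3 : Real.sqrt (dist (y i) (z i) ^ 2) ≤ Real.sqrt (∑ j, dist (y j) (z j) ^ 2) :=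
      Real.sqrt_le_sqrt h1
    rw [Real.sqrt_sq dist_nonneg] at h3
    exact h3.trans hy
  rw [show (2*r)/2 = r by ring]
  rw [← Real.dist_eq]; exact h2

lemma cube_mono (n : ℕ) (z : Euc n) {s t : ℝ} (h : s ≤ t) : cube n z s ⊆ cube n z t :=
  fun y hy i => (hy i).trans (by linarith)

lemma ofReal_setAverage_le {β : Type*} [MeasurableSpace β] (μ : Measure β) (s : Set β)
    (F : β → ℝ) (hF : ∀ x, 0 ≤ F x) (h0 : μ s ≠ 0) (htop : μ s ≠ ∞) :
    ENNReal.ofReal (⨍ x in s, F x ∂μ) ≤ (μ s)⁻¹ * ∫⁻ x in s, ENNReal.ofReal (F x) ∂μ := by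
  rw [setAverage_eq, smul_eq_mul, ENNReal.ofReal_mul (by positivity)]
  have h1 : ENNReal.ofReal (μ.real s)⁻¹ = (μ s)⁻¹ := by
    rw [measureReal_def, ENNReal.ofReal_inv_of_pos (ENNReal.toReal_pos h0 htop), ENNReal.ofReal_toReal htop]
  rw [h1]
  refine mul_le_mul_right ?_ _
  by_cases hInt : Integrable F (μ.restrict s)
  · rw [ofReal_integral_eq_lintegral_ofReal hInt (Filter.Eventually.of_forall hF)]
  · rw [integral_undef hInt]; simp

lemma average_nonneg' {β : Type*} [MeasurableSpace β] (μ : Measure β) (s : Set β)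
    (F : β → ℝ) (hF : ∀ x, 0 ≤ F x) : 0 ≤ ⨍ x in s, F x ∂μ := by
  rw [setAverage_eq, smul_eq_mul]
  exact mul_nonneg (by positivity) (integral_nonneg hF)

lemma dblavg_le (n : ℕ) {κ : ℝ} (hκ : 0 ≤ κ) (S : Set (Euc n))
    (h0 : volume S ≠ 0) (htop : volume S ≠ ∞)
    (g : Euc n × Euc n → ℝ)
    (hg : AEMeasurable (fun w => ENNReal.ofReal |g w|) (volume : Measure (Euc n × Euc n))) :
    ENNReal.ofReal ((⨍ x in S, ⨍ y in S, |g (x, y)|) ^ κ) ≤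
      ((volume (S ×ˢ S))⁻¹ * ∫⁻ w in S ×ˢ S, ENNReal.ofReal (|g w|)) ^ κ := by
  have hinner_nonneg : ∀ x, 0 ≤ ⨍ y in S, |g (x, y)| :=
    fun x => average_nonneg' _ _ _ (fun y => abs_nonneg _)
  have havg_nonneg : 0 ≤ ⨍ x in S, ⨍ y in S, |g (x, y)| :=
    average_nonneg' _ _ _ hinner_nonneg
  rw [← ENNReal.ofReal_rpow_of_nonneg havg_nonneg hκ]
  refine ENNReal.rpow_le_rpow ?_ hκ
  have step1 : ENNReal.ofReal (⨍ x in S, ⨍ y in S, |g (x, y)|) ≤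
      (volume S)⁻¹ * ∫⁻ x in S, ENNReal.ofReal (⨍ y in S, |g (x, y)|) :=
    ofReal_setAverage_le _ _ _ hinner_nonneg h0 htop
  refine step1.trans ?_
  have step2 : ∫⁻ x in S, ENNReal.ofReal (⨍ y in S, |g (x, y)|) ≤
      ∫⁻ x in S, (volume S)⁻¹ * ∫⁻ y in S, ENNReal.ofReal (|g (x, y)|) := by
    refine lintegral_mono fun x => ?_
    exact ofReal_setAverage_le _ _ _ (fun y => abs_nonneg _) h0 htop
  have hfin : (volume S)⁻¹ ≠ ∞ := ENNReal.inv_ne_top.2 h0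
  have step3 : ∫⁻ x in S, (volume S)⁻¹ * ∫⁻ y in S, ENNReal.ofReal (|g (x, y)|) =
      (volume S)⁻¹ * ∫⁻ x in S, ∫⁻ y in S, ENNReal.ofReal (|g (x, y)|) :=
    lintegral_const_mul' _ _ hfin
  have hprodmeas : ((volume : Measure (Euc n)).restrict S).prod
      ((volume : Measure (Euc n)).restrict S) =
      (volume : Measure (Euc n × Euc n)).restrict (S ×ˢ S) := by
    rw [Measure.prod_restrict, ← Measure.volume_eq_prod]
  have step4 : ∫⁻ x in S, ∫⁻ y in S, ENNReal.ofReal (|g (x, y)|) =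
      ∫⁻ w in S ×ˢ S, ENNReal.ofReal (|g w|) := by
    have h4 := lintegral_prod (μ := (volume : Measure (Euc n)).restrict S)
      (ν := (volume : Measure (Euc n)).restrict S) (fun w => ENNReal.ofReal (|g w|))
      (by rw [hprodmeas]; exact hg.restrict)
    rw [hprodmeas] at h4
    exact h4.symm
  have hvol : volume (S ×ˢ S) = volume S * volume S := by
    rw [Measure.volume_eq_prod, Measure.prod_prod]
  calc (volume S)⁻¹ * ∫⁻ x in S, ENNReal.ofReal (⨍ y in S, |g (x, y)|)
      ≤ (volume S)⁻¹ * ((volume S)⁻¹ * ∫⁻ x in S, ∫⁻ y in S, ENNReal.ofReal (|g (x, y)|)) := by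
        rw [← step3]; exact mul_le_mul_right step2 _
    _ = (volume (S ×ˢ S))⁻¹ * ∫⁻ w in S ×ˢ S, ENNReal.ofReal (|g w|) := by
        rw [step4, hvol, ← mul_assoc, ENNReal.mul_inv (Or.inl h0) (Or.inl htop)]

set_option maxHeartbeats 2000000 in
/-- Let `G ⊊ ℝⁿ` be open, `n ≥ 2`, `1<κ<∞`, `L ≥ 1`, and let `W` be a family
of closed axis-parallel cubes with pairwise disjoint interiors whose union is `G`. Then
there is `C>0`, depending only on `n` and `κ`, such that for every `g ∈ L^κ(ℝⁿ×ℝⁿ)`,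
`Σ_{Q∈W} |Q|² (⨍_{LQ} ⨍_{LQ} |g|)^κ ≤ C ∫∫ |g|^κ`. -/
theorem statement10 (n : ℕ) (hn : 2 ≤ n) (κ L : ℝ) (hκ : 1 < κ) (hL : 1 ≤ L) :
    ∃ C : ℝ, 0 < C ∧ ∀ (G : Set (Euc n)), IsOpen G → G ≠ Set.univ →
      ∀ (z : ℕ → Euc n) (ℓ : ℕ → ℝ), (∀ i, 0 < ℓ i) →
      (Pairwise fun i j =>
        Disjoint (interior (cube n (z i) (ℓ i))) (interior (cube n (z j) (ℓ j)))) →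
      (⋃ i, cube n (z i) (ℓ i)) = G →
      ∀ g : Euc n × Euc n → ℝ, MemLp g (ENNReal.ofReal κ) volume →
      (∑' i, volume (cube n (z i) (ℓ i)) ^ 2 *
          ENNReal.ofReal
            ((⨍ x in cube n (z i) (L * ℓ i), ⨍ y in cube n (z i) (L * ℓ i), |g (x, y)|) ^ κ)) ≤
        ENNReal.ofReal C * ∫⁻ x, ∫⁻ y, ENNReal.ofReal (|g (x, y)| ^ κ) := by
  have hκ0 : (0:ℝ) ≤ κ := by linarith
  have hκ1 : (0:ℝ) ≤ κ - 1 := by linarith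
  -- constants
  set Kc : ℝ≥0∞ := ENNReal.ofReal ((4 * Real.sqrt n) ^ n) ^ 2 with hKc_def
  set c₇ : ℝ≥0∞ := (2:ℝ≥0∞) ^ (2 * (κ - 1)) * (1 - (2:ℝ≥0∞) ^ (1 - κ))⁻¹ with hc7_def
  have hq1 : (2:ℝ≥0∞) ^ (1 - κ) < 1 :=
    ENNReal.rpow_lt_one_of_one_lt_of_neg (by norm_num : (1:ℝ≥0∞) < 2) (by linarith)
  have hc7_ne_top : c₇ ≠ ∞ := by
    apply ENNReal.mul_ne_top (two_rpow_ne_top _)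
    rw [ENNReal.inv_ne_top]
    simp only [ne_eq, tsub_eq_zero_iff_le, not_le]
    exact hq1
  set Ctot : ℝ≥0∞ := Kc * (2:ℝ≥0∞) ^ (κ + 2) * c₇ with hCtot_def
  have hKc_ne_top : Kc ≠ ∞ := by
    exact ENNReal.pow_ne_top ENNReal.ofReal_ne_top
  have hCtot_ne_top : Ctot ≠ ∞ :=
    ENNReal.mul_ne_top (ENNReal.mul_ne_top hKc_ne_top (two_rpow_ne_top _)) hc7_ne_top
  refine ⟨Ctot.toReal + 1, by positivity, ?_⟩
  intro G hGopen hGne z ℓ hℓ hdisj hUnion g hg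
  -- measurable version of |g| in ℝ≥0∞
  have hgm : AEMeasurable (fun w => ENNReal.ofReal (|g w|)) (volume : Measure (Euc n × Euc n)) :=
    (measurable_abs.comp_aemeasurable hg.1.aemeasurable).ennreal_ofReal
  set f : Euc n × Euc n → ℝ≥0∞ := hgm.mk _ with hf_def
  have hfm : Measurable f := hgm.measurable_mk
  have hfae : (fun w => ENNReal.ofReal (|g w|)) =ᵐ[volume] f := hgm.ae_eq_mk
  set X' : ℝ≥0∞ := ∫⁻ w, f w ^ κ with hX'_def
  -- identify the RHS integral with X'
  have hgκm : AEMeasurable (fun w => ENNReal.ofReal (|g w| ^ κ))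
      (volume : Measure (Euc n × Euc n)) := by
    have h1 : Measurable (fun x : ℝ => ENNReal.ofReal (|x| ^ κ)) :=
      ((Real.continuous_rpow_const hκ0).measurable.comp measurable_abs).ennreal_ofReal
    exact h1.comp_aemeasurable hg.1.aemeasurable
  have hXX : X' = ∫⁻ x, ∫⁻ y, ENNReal.ofReal (|g (x, y)| ^ κ) := by
    have h1 : X' = ∫⁻ w, ENNReal.ofReal (|g w| ^ κ) := by
      rw [hX'_def]
      refine lintegral_congr_ae ?_
      filter_upwards [hfae] with w hw
      rw [← hw, ENNReal.ofReal_rpow_of_nonneg (abs_nonneg _) hκ0]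
    rw [h1]
    rw [Measure.volume_eq_prod] at hgκm ⊢
    exact lintegral_prod _ hgκm
  rw [← hXX]
  have hCle : Ctot ≤ ENNReal.ofReal (Ctot.toReal + 1) := by
    rw [ENNReal.ofReal_add ENNReal.toReal_nonneg zero_le_one, ENNReal.ofReal_toReal hCtot_ne_top]
    exact le_self_add
  refine le_trans ?_ (mul_le_mul_left hCle X')
  -- it suffices to bound by Ctot * X'
  rcases eq_or_ne X' ∞ with hX'top | hX'fin
  · rw [hX'top, ENNReal.mul_top]
    · exact le_top
    · rw [hCtot_def, hc7_def]
      apply mul_ne_zero (mul_ne_zero _ (two_rpow_ne_zero _)) _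
      · rw [hKc_def]
        apply pow_ne_zero
        simp only [ne_eq, ENNReal.ofReal_eq_zero, not_le]
        have hsn : (0:ℝ) < Real.sqrt n := Real.sqrt_pos.2 (by exact_mod_cast (by omega : 0 < n))
        exact pow_pos (by linarith) n
      · apply mul_ne_zero (two_rpow_ne_zero _)
        rw [ENNReal.inv_ne_zero]
        exact ne_top_of_le_ne_top ENNReal.one_ne_top tsub_le_self
  -- notation
  set Q : ℕ → Set (Euc n) := fun i => cube n (z i) (ℓ i) with hQ_def
  set S : ℕ → Set (Euc n) := fun i => cube n (z i) (L * ℓ i) with hS_def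
  set D : ℕ → Set (Euc n × Euc n) := fun i => S i ×ˢ S i with hD_def
  set E : ℕ → Set (Euc n × Euc n) := fun i => interior (Q i) ×ˢ interior (Q i) with hE_def
  set P : ℕ → Euc n × Euc n := fun i => (z i, z i) with hP_def
  set rad : ℕ → ℝ := fun i => (L * ℓ i) * Real.sqrt n / 2 with hrad_def
  set A : ℕ → ℝ≥0∞ := fun i => (volume (D i))⁻¹ * ∫⁻ w in D i, f w with hA_def
  set wgt : ℕ → ℝ≥0∞ := fun i => volume (Q i) ^ 2 with hwgt_def
  have hsℓ : ∀ i, 0 < L * ℓ i := fun i => mul_pos (by linarith) (hℓ i)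
  have hSvol : ∀ i, volume (S i) = ENNReal.ofReal ((L * ℓ i) ^ n) :=
    fun i => volume_cube n (z i) (hsℓ i).le
  have hDvol : ∀ i, volume (D i) = ENNReal.ofReal ((L * ℓ i) ^ n) ^ 2 := by
    intro i
    rw [hD_def]
    simp only
    rw [Measure.volume_eq_prod, Measure.prod_prod, hSvol i, sq]
  have hD0 : ∀ i, volume (D i) ≠ 0 := by
    intro i
    rw [hDvol i]
    apply pow_ne_zero
    simp only [ne_eq, ENNReal.ofReal_eq_zero, not_le]
    exact pow_pos (hsℓ i) n
  have hDtop : ∀ i, volume (D i) ≠ ∞ := by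
    intro i
    rw [hDvol i]
    exact ENNReal.pow_ne_top ENNReal.ofReal_ne_top
  have hEvol : ∀ i, volume (E i) = wgt i := by
    intro i
    rw [hE_def, hwgt_def]
    simp only
    rw [Measure.volume_eq_prod, Measure.prod_prod,
      interior_cube_volume n (z i) (hℓ i).le, ← volume_cube n (z i) (hℓ i).le, sq, hQ_def]
  -- Step I : termwise bound
  have hterm : ∀ i, volume (Q i) ^ 2 *
      ENNReal.ofReal ((⨍ x in S i, ⨍ y in S i, |g (x, y)|) ^ κ) ≤ wgt i * A i ^ κ := by
    intro i
    refine mul_le_mul_right ?_ _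
    have hS0 : volume (S i) ≠ 0 := by
      rw [hSvol i]
      simp only [ne_eq, ENNReal.ofReal_eq_zero, not_le]
      exact pow_pos (hsℓ i) n
    have hStop : volume (S i) ≠ ∞ := by rw [hSvol i]; exact ENNReal.ofReal_ne_top
    refine le_trans (dblavg_le n hκ0 (S i) hS0 hStop g hgm) ?_
    have heq : ∫⁻ w in S i ×ˢ S i, ENNReal.ofReal (|g w|) = ∫⁻ w in D i, f w := by
      rw [hD_def]
      exact lintegral_congr_ae (ae_restrict_of_ae hfae)
    rw [heq]
  refine le_trans (ENNReal.tsum_le_tsum hterm) ?_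
  -- Step II : A i is finite
  have hAfin : ∀ i, A i ≠ ∞ := by
    intro i
    have hpq : κ.HolderConjugate (Real.conjExponent κ) := Real.HolderConjugate.conjExponent hκ
    have hHolder := ENNReal.lintegral_mul_le_Lp_mul_Lq ((volume : Measure (Euc n × Euc n)).restrict (D i))
      hpq hfm.aemeasurable (aemeasurable_const (b := (1:ℝ≥0∞)))
    simp only [Pi.mul_apply, mul_one, ENNReal.one_rpow, lintegral_one,
      Measure.restrict_apply_univ] at hHolder
    have hfin1 : (∫⁻ w in D i, f w ^ κ) ^ (1/κ) ≠ ∞ := by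
      apply ENNReal.rpow_ne_top_of_nonneg (by positivity)
      refine ne_top_of_le_ne_top hX'fin ?_
      exact lintegral_mono' Measure.restrict_le_self le_rfl
    have hfin2 : (volume (D i)) ^ (1/(Real.conjExponent κ)) ≠ ∞ :=
      ENNReal.rpow_ne_top_of_nonneg (div_nonneg zero_le_one hpq.symm.pos.le) (hDtop i)
    have hfin : ∫⁻ w in D i, f w ≠ ∞ :=
      ne_top_of_le_ne_top (ENNReal.mul_ne_top hfin1 hfin2) hHolder
    exact ENNReal.mul_ne_top (ENNReal.inv_ne_top.2 (hD0 i)) hfin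
  -- Step III : layer cake
  refine le_trans (layercake_discrete hκ wgt A hAfin) ?_
  -- geometric facts
  have hQS : ∀ i, Q i ⊆ S i := fun i =>
    cube_mono n (z i) (le_mul_of_one_le_left (hℓ i).le hL)
  have hED : ∀ i, E i ⊆ D i := fun i =>
    Set.prod_mono (interior_subset.trans (hQS i)) (interior_subset.trans (hQS i))
  have hrad0 : ∀ i, 0 ≤ rad i := by
    intro i
    rw [hrad_def]
    have h1 := (hsℓ i).le
    have h2 : (0:ℝ) ≤ Real.sqrt n := Real.sqrt_nonneg _
    positivity
  have hDB : ∀ i, D i ⊆ closedBall (P i) (rad i) := by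
    intro i
    rw [hD_def, hP_def, hrad_def]
    simp only
    rw [← closedBall_prod_same]
    exact Set.prod_mono (cube_subset_closedBall n (z i) (hsℓ i).le)
      (cube_subset_closedBall n (z i) (hsℓ i).le)
  have hB4 : ∀ i, volume (closedBall (P i) (4 * rad i)) ≤ Kc * volume (D i) := by
    intro i
    have hρ : (0:ℝ) ≤ 4 * rad i := by linarith [hrad0 i]
    have hsub : closedBall (P i) (4 * rad i) ⊆
        cube n (z i) (2*(4*rad i)) ×ˢ cube n (z i) (2*(4*rad i)) := by
      rw [hP_def, ← closedBall_prod_same]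
      exact Set.prod_mono (closedBall_subset_cube n (z i) hρ) (closedBall_subset_cube n (z i) hρ)
    refine le_trans (measure_mono hsub) ?_
    have h2ρ : 2*(4*rad i) = (4*Real.sqrt n)*(L*ℓ i) := by rw [hrad_def]; ring
    have hcv : volume (cube n (z i) (2*(4*rad i)) ×ˢ cube n (z i) (2*(4*rad i))) =
        ENNReal.ofReal (((4*Real.sqrt n)*(L*ℓ i))^n) ^ 2 := by
      rw [Measure.volume_eq_prod, Measure.prod_prod,
        volume_cube n (z i) (by linarith [hrad0 i] : (0:ℝ) ≤ 2*(4*rad i)), h2ρ, sq]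
    rw [hcv, hDvol i, hKc_def]
    apply le_of_eq
    rw [mul_pow, ENNReal.ofReal_mul (by positivity), mul_pow]
  -- Step IV : per-k weak type bound
  have hνk : ∀ k : ℤ, (∑' i, if (2:ℝ≥0∞)^((k:ℝ)-1) < A i then wgt i else 0)
      ≤ Kc * ((2:ℝ≥0∞)^(2-(k:ℝ)) *
          ∫⁻ w, (if (2:ℝ≥0∞)^((k:ℝ)-2) < f w then f w else 0)) := by
    intro k
    set t : ℝ≥0∞ := (2:ℝ≥0∞)^((k:ℝ)-1) with ht_def
    set τ : ℝ≥0∞ := (2:ℝ≥0∞)^((k:ℝ)-2) with hτ_def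
    set h : (Euc n × Euc n) → ℝ≥0∞ := fun w => if τ < f w then f w else 0 with hh_def
    set I : Set ℕ := {i | t < A i} with hI_def
    have hτinv : (2:ℝ≥0∞)^(2-(k:ℝ)) = τ⁻¹ := by
      rw [hτ_def, ← ENNReal.rpow_neg]
      congr 1
      ring
    have hfτ : ∀ w, f w ≤ τ + h w := by
      intro w
      rw [hh_def]
      simp only
      by_cases hw : τ < f w
      · rw [if_pos hw]; exact le_add_self
      · rw [if_neg hw]; rw [add_zero]; exact not_lt.1 hw
    have hIt : ∀ i ∈ I, volume (D i) ≤ (2:ℝ≥0∞)^(2-(k:ℝ)) * ∫⁻ w in D i, h w := by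
      intro i hi
      have h2 : t < A i := hi
      rw [hA_def] at h2
      simp only at h2
      have h3 := (ENNReal.mul_lt_mul_iff_right (hD0 i) (hDtop i)).2 h2
      rw [← mul_assoc, ENNReal.mul_inv_cancel (hD0 i) (hDtop i), one_mul] at h3
      have h4 : ∫⁻ w in D i, f w ≤ τ * volume (D i) + ∫⁻ w in D i, h w := by
        calc ∫⁻ w in D i, f w ≤ ∫⁻ w in D i, (τ + h w) := lintegral_mono fun w => hfτ w
          _ = τ * volume (D i) + ∫⁻ w in D i, h w := by
              rw [lintegral_add_left measurable_const, setLIntegral_const]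
      have ht2 : t = τ * 2 := by
        rw [ht_def, hτ_def, show ((k:ℝ)-1) = ((k:ℝ)-2) + 1 by ring, two_rpow_add,
          ENNReal.rpow_one]
      have h5 : τ * volume (D i) < ∫⁻ w in D i, h w := by
        have hfin : τ * volume (D i) ≠ ∞ := ENNReal.mul_ne_top (two_rpow_ne_top _) (hDtop i)
        have h6 : τ * volume (D i) + τ * volume (D i) < τ * volume (D i) + ∫⁻ w in D i, h w := by
          calc τ * volume (D i) + τ * volume (D i) = volume (D i) * t := by rw [ht2]; ring
            _ < ∫⁻ w in D i, f w := h3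
            _ ≤ τ * volume (D i) + ∫⁻ w in D i, h w := h4
        exact (ENNReal.add_lt_add_iff_left hfin).1 h6
      rw [hτinv]
      calc volume (D i) = τ⁻¹ * (τ * volume (D i)) := by
            rw [← mul_assoc, ENNReal.inv_mul_cancel (two_rpow_ne_zero _) (two_rpow_ne_top _),
              one_mul]
        _ ≤ τ⁻¹ * ∫⁻ w in D i, h w := mul_le_mul_right h5.le _
    -- integral bound for h
    have hY : ∫⁻ w, h w ≤ (2:ℝ≥0∞)^(((k:ℝ)-2)*(1-κ)) * X' := by
      have hpt : ∀ w, h w ≤ (2:ℝ≥0∞)^(((k:ℝ)-2)*(1-κ)) * f w ^ κ := by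
        intro w
        rw [hh_def]
        simp only
        by_cases hw : τ < f w
        · rw [if_pos hw]
          rcases eq_or_ne (f w) ∞ with htop | hne
          · rw [htop, ENNReal.top_rpow_of_pos (by linarith), ENNReal.mul_top (two_rpow_ne_zero _)]
          · have hf0 : f w ≠ 0 := ((two_rpow_pos _).trans hw).ne'
            have hτκ : τ ^ (κ-1) ≤ f w ^ (κ-1) := ENNReal.rpow_le_rpow hw.le hκ1
            have hfκ : f w ^ κ = f w ^ (κ-1) * f w := by
              nth_rewrite 3 [← ENNReal.rpow_one (f w)]
              rw [← ENNReal.rpow_add _ _ hf0 hne]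
              norm_num
            have hττ : (2:ℝ≥0∞)^(((k:ℝ)-2)*(1-κ)) * τ ^ (κ-1) = 1 := by
              rw [hτ_def, ← ENNReal.rpow_mul, ← two_rpow_add]
              rw [show ((k:ℝ)-2)*(1-κ) + ((k:ℝ)-2)*(κ-1) = 0 by ring, ENNReal.rpow_zero]
            calc f w = ((2:ℝ≥0∞)^(((k:ℝ)-2)*(1-κ)) * τ ^ (κ-1)) * f w := by rw [hττ, one_mul]
              _ ≤ ((2:ℝ≥0∞)^(((k:ℝ)-2)*(1-κ)) * f w ^ (κ-1)) * f w := by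
                  exact mul_le_mul_left (mul_le_mul_right hτκ _) _
              _ = (2:ℝ≥0∞)^(((k:ℝ)-2)*(1-κ)) * f w ^ κ := by rw [hfκ]; ring
        · rw [if_neg hw]; exact zero_le
      calc ∫⁻ w, h w ≤ ∫⁻ w, (2:ℝ≥0∞)^(((k:ℝ)-2)*(1-κ)) * f w ^ κ := lintegral_mono hpt
        _ = (2:ℝ≥0∞)^(((k:ℝ)-2)*(1-κ)) * X' := lintegral_const_mul' _ _ (two_rpow_ne_top _)
    have hYfin : ∫⁻ w, h w ≠ ∞ :=
      ne_top_of_le_ne_top (ENNReal.mul_ne_top (two_rpow_ne_top _) hX'fin) hY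
    set M : ℝ≥0∞ := (2:ℝ≥0∞)^(2-(k:ℝ)) * ∫⁻ w, h w with hM_def
    have hMfin : M ≠ ∞ := ENNReal.mul_ne_top (two_rpow_ne_top _) hYfin
    have hradbd : ∀ i ∈ I, rad i ≤ (max 1 M.toReal) * Real.sqrt n / 2 := by
      intro i hi
      have h8 : volume (D i) ≤ M := by
        refine le_trans (hIt i hi) ?_
        rw [hM_def]
        exact mul_le_mul_right (lintegral_mono' Measure.restrict_le_self le_rfl) _
      have hsmax : L * ℓ i ≤ max 1 M.toReal := by
        by_cases hs1 : L * ℓ i ≤ 1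
        · exact hs1.trans (le_max_left _ _)
        · push_neg at hs1
          have h9 : ENNReal.ofReal ((L * ℓ i)^n) ≤ M := by
            refine le_trans ?_ h8
            rw [hDvol i]
            have hb1 : (1:ℝ≥0∞) ≤ ENNReal.ofReal ((L * ℓ i)^n) := by
              rw [show (1:ℝ≥0∞) = ENNReal.ofReal 1 by simp]
              exact ENNReal.ofReal_le_ofReal (one_le_pow₀ hs1.le)
            calc ENNReal.ofReal ((L * ℓ i)^n) = ENNReal.ofReal ((L * ℓ i)^n) * 1 :=
                  (mul_one _).symm
              _ ≤ ENNReal.ofReal ((L * ℓ i)^n) * ENNReal.ofReal ((L * ℓ i)^n) :=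
                  mul_le_mul_right hb1 _
              _ = ENNReal.ofReal ((L * ℓ i)^n) ^ 2 := (sq _).symm
          have h10 : (L * ℓ i)^n ≤ M.toReal := by
            rw [← ENNReal.ofReal_le_iff_le_toReal hMfin]
            exact h9
          have h11 : L * ℓ i ≤ (L * ℓ i)^n := le_self_pow₀ hs1.le (by omega)
          exact ((h11.trans h10).trans (le_max_right _ _))
      rw [hrad_def]
      simp only
      have := mul_le_mul_of_nonneg_right hsmax (Real.sqrt_nonneg (n:ℝ))
      linarith
    -- identify the sum with a measure of a union
    have hνeq : (∑' i, if t < A i then wgt i else 0) = volume (⋃ i ∈ I, E i) := by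
      have hEdisj : ∀ (i j : ℕ), i ≠ j → Disjoint (E i) (E j) := by
        intro i j hij
        have hd := Set.disjoint_left.mp (hdisj hij)
        refine Set.disjoint_left.mpr ?_
        rintro ⟨a, b⟩ hab hab'
        exact hd hab.1 hab'.1
      have hEm : ∀ i, MeasurableSet (E i) :=
        fun i => (isOpen_interior.measurableSet.prod isOpen_interior.measurableSet)
      have hμeq := measure_biUnion (μ := (volume : Measure (Euc n × Euc n))) (s := I) (f := E)
        (Set.to_countable I) (fun i _ j _ hij => hEdisj i j hij) (fun i _ => hEm i)
      rw [hμeq, tsum_congr (fun p : I => hEvol p), tsum_subtype I wgt]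
      refine tsum_congr fun i => ?_
      by_cases hc : t < A i
      · simp only [Set.indicator_apply, hI_def, Set.mem_setOf_eq, if_pos hc]
      · simp only [Set.indicator_apply, hI_def, Set.mem_setOf_eq, if_neg hc]
    rw [hνeq]
    have hw := vitali_weak volume E D P rad Kc ((2:ℝ≥0∞)^(2-(k:ℝ))) I h
      ((max 1 M.toReal) * Real.sqrt n / 2) hED hDB (fun i _ => hB4 i) hradbd hIt
    calc volume (⋃ i ∈ I, E i) ≤ Kc * ((2:ℝ≥0∞)^(2-(k:ℝ))) * ∫⁻ w, h w := hw
      _ = Kc * ((2:ℝ≥0∞)^(2-(k:ℝ)) * ∫⁻ w, h w) := by ring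
  -- Step V : final summation
  have hhm : ∀ k : ℤ, Measurable (fun w => if (2:ℝ≥0∞)^((k:ℝ)-2) < f w then f w else 0) := by
    intro k
    exact Measurable.ite (measurableSet_lt measurable_const hfm) hfm measurable_const
  calc ∑' k:ℤ, (2:ℝ≥0∞)^(((k:ℝ)+1)*κ) * (∑' i, if (2:ℝ≥0∞)^((k:ℝ)-1) < A i then wgt i else 0)
      ≤ ∑' k:ℤ, (2:ℝ≥0∞)^(((k:ℝ)+1)*κ) * (Kc * ((2:ℝ≥0∞)^(2-(k:ℝ)) *
          ∫⁻ w, (if (2:ℝ≥0∞)^((k:ℝ)-2) < f w then f w else 0))) :=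
        ENNReal.tsum_le_tsum fun k => mul_le_mul_right (hνk k) _
    _ = Kc * (2:ℝ≥0∞)^(κ+2) * ∑' k:ℤ, (2:ℝ≥0∞)^((k:ℝ)*(κ-1)) *
          ∫⁻ w, (if (2:ℝ≥0∞)^((k:ℝ)-2) < f w then f w else 0) := by
        rw [← ENNReal.tsum_mul_left]
        refine tsum_congr fun k => ?_
        have he : (2:ℝ≥0∞)^(((k:ℝ)+1)*κ) * (2:ℝ≥0∞)^(2-(k:ℝ)) =
            (2:ℝ≥0∞)^(κ+2) * (2:ℝ≥0∞)^((k:ℝ)*(κ-1)) := by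
          rw [← two_rpow_add, ← two_rpow_add]
          congr 1
          ring
        calc (2:ℝ≥0∞)^(((k:ℝ)+1)*κ) * (Kc * ((2:ℝ≥0∞)^(2-(k:ℝ)) *
              ∫⁻ w, (if (2:ℝ≥0∞)^((k:ℝ)-2) < f w then f w else 0)))
            = Kc * ((2:ℝ≥0∞)^(((k:ℝ)+1)*κ) * (2:ℝ≥0∞)^(2-(k:ℝ))) *
              ∫⁻ w, (if (2:ℝ≥0∞)^((k:ℝ)-2) < f w then f w else 0) := by ring
          _ = Kc * ((2:ℝ≥0∞)^(κ+2) * (2:ℝ≥0∞)^((k:ℝ)*(κ-1))) *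
              ∫⁻ w, (if (2:ℝ≥0∞)^((k:ℝ)-2) < f w then f w else 0) := by rw [he]
          _ = Kc * (2:ℝ≥0∞)^(κ+2) * ((2:ℝ≥0∞)^((k:ℝ)*(κ-1)) *
              ∫⁻ w, (if (2:ℝ≥0∞)^((k:ℝ)-2) < f w then f w else 0)) := by ring
    _ ≤ Kc * (2:ℝ≥0∞)^(κ+2) * (c₇ * X') := by
        refine mul_le_mul_right ?_ _
        have hswap : ∑' k:ℤ, (2:ℝ≥0∞)^((k:ℝ)*(κ-1)) *
            ∫⁻ w, (if (2:ℝ≥0∞)^((k:ℝ)-2) < f w then f w else 0) =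
            ∫⁻ w, ∑' k:ℤ, (if (2:ℝ≥0∞)^((k:ℝ)-2) < f w
              then (2:ℝ≥0∞)^((k:ℝ)*(κ-1)) * f w else 0) := by
          have h1 : ∀ k:ℤ, (2:ℝ≥0∞)^((k:ℝ)*(κ-1)) *
              ∫⁻ w, (if (2:ℝ≥0∞)^((k:ℝ)-2) < f w then f w else 0) =
              ∫⁻ w, (if (2:ℝ≥0∞)^((k:ℝ)-2) < f w
                then (2:ℝ≥0∞)^((k:ℝ)*(κ-1)) * f w else 0) := by
            intro k
            rw [← lintegral_const_mul' _ _ (two_rpow_ne_top _)]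
            refine lintegral_congr fun w => ?_
            rw [mul_ite, mul_zero]
          rw [tsum_congr h1]
          refine (lintegral_tsum fun k => ?_).symm
          exact (Measurable.ite (measurableSet_lt measurable_const hfm)
            (measurable_const.mul hfm) measurable_const).aemeasurable
        rw [hswap]
        calc ∫⁻ w, ∑' k:ℤ, (if (2:ℝ≥0∞)^((k:ℝ)-2) < f w
              then (2:ℝ≥0∞)^((k:ℝ)*(κ-1)) * f w else 0)
            ≤ ∫⁻ w, c₇ * f w ^ κ := lintegral_mono fun w => geom_bound hκ (f w)
          _ = c₇ * X' := lintegral_const_mul' _ _ hc7_ne_top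
    _ = Ctot * X' := by rw [hCtot_def]; ring


end
end

section
/- Let 0<s<1 and 1<p<∞, and let G ⊊ ℝⁿ be an open set. Then the zero extension E_G u of any u ∈ W^{s,p}(G) satisfies |E_G u|_{W^{s,p}(ℝⁿ)}^p ≤ |u|_{W^{s,p}(G)}^p + C ∫_G |u(x)|^p dist(x,∂G)^{-sp} dx, where the constant C>0 depends only on n, s, and p. -/
open MeasureTheory Metric Set
open scoped ENNReal NNReal Topology

noncomputable section

lemma exists_annulus {d T : ℝ} (hd : 0 < d) (hT : d ≤ T) :
    ∃ k : ℕ, 2 ^ k * d ≤ T ∧ T < 2 ^ (k + 1) * d := by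
  have hex : ∃ m : ℕ, T < 2 ^ (m + 1) * d := by
    obtain ⟨m, hm⟩ := pow_unbounded_of_one_lt (T / d) (one_lt_two (α := ℝ))
    rw [div_lt_iff₀ hd] at hm
    exact ⟨m, hm.trans_le (by gcongr <;> norm_num)⟩
  classical
  refine ⟨Nat.find hex, ?_, Nat.find_spec hex⟩
  rcases Nat.eq_zero_or_pos (Nat.find hex) with h0 | hpos
  · rw [h0]; simpa using hT
  · obtain ⟨j, hj⟩ := Nat.exists_eq_succ_of_ne_zero hpos.ne'
    rw [hj]
    have := Nat.find_min hex (m := j) (by omega)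
    push_neg at this
    simpa using this

lemma pow_calc (n k : ℕ) {t d : ℝ} (hd : 0 < d) :
    1 / ((2:ℝ) ^ k * d) ^ ((n:ℝ) + t) * ((2:ℝ) ^ (k + 1) * d) ^ n
      = (2:ℝ) ^ n * ((2:ℝ) ^ (-t)) ^ k * (1 / d ^ t) := by
  have h2 : (0:ℝ) < 2 := two_pos
  rw [Real.mul_rpow (by positivity) hd.le, pow_succ, mul_pow, mul_pow]
  rw [← Real.rpow_natCast (2:ℝ) k, ← Real.rpow_natCast d n,
    ← Real.rpow_natCast ((2:ℝ) ^ (-t)) k, ← Real.rpow_natCast (2:ℝ) n]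
  simp only [← Real.rpow_mul h2.le]
  simp only [Real.rpow_def_of_pos h2, Real.rpow_def_of_pos hd, one_div, mul_inv,
    ← Real.exp_add, ← Real.exp_neg]
  simp only [← Real.exp_nat_mul, ← Real.exp_add]
  rw [Real.exp_eq_exp]
  ring

lemma keyA (n : ℕ) (t : ℝ) (ht : 0 < t) :
    ∃ C₀ : ℝ≥0∞, C₀ ≠ ⊤ ∧ ∀ (x0 : Euc n) (d : ℝ), 0 < d →
      ∫⁻ y in {y : Euc n | d ≤ dist x0 y},
          ENNReal.ofReal (1 / dist x0 y ^ ((n:ℝ) + t)) ≤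
        C₀ * ENNReal.ofReal (1 / d ^ t) := by
  rcases Nat.eq_zero_or_pos n with hn | hn
  · refine ⟨1, ENNReal.one_ne_top, fun x0 d hd => ?_⟩
    subst hn
    have : {y : Euc 0 | d ≤ dist x0 y} = ∅ := by
      ext y
      simp [Subsingleton.elim y x0, hd.not_ge]
    simp [this]
  haveI : Nonempty (Fin n) := ⟨⟨0, hn⟩⟩
  haveI : Nontrivial (Euc n) := by
    unfold Euc EuclideanSpace PiLp
    exact (WithLp.equiv 2 _).nontrivial
  set q : ℝ≥0∞ := ENNReal.ofReal ((2:ℝ) ^ (-t)) with hqdef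
  have hq1 : q < 1 := by
    rw [hqdef, ← ENNReal.ofReal_one]
    exact (ENNReal.ofReal_lt_ofReal_iff one_pos).2
      (Real.rpow_lt_one_of_one_lt_of_neg one_lt_two (by linarith))
  set B : ℝ≥0∞ := volume (ball (0 : Euc n) 1) with hBdef
  refine ⟨(∑' k : ℕ, q ^ k) * (ENNReal.ofReal 2 ^ n * B), ?_, ?_⟩
  · refine ENNReal.mul_ne_top ?_ (ENNReal.mul_ne_top (ENNReal.pow_ne_top ENNReal.ofReal_ne_top)
      measure_ball_lt_top.ne)
    rw [ENNReal.tsum_geometric]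
    refine ENNReal.inv_ne_top.2 ?_
    simp [tsub_eq_zero_iff_le, hq1.not_ge]
  · intro x0 d hd
    set r : ℝ := (n:ℝ) + t with hrdef
    set A : ℕ → Set (Euc n) :=
      fun k => {y : Euc n | 2 ^ k * d ≤ dist x0 y} ∩ ball x0 (2 ^ (k + 1) * d) with hAdef
    have hsub : {y : Euc n | d ≤ dist x0 y} ⊆ ⋃ k, A k := by
      intro y hy
      obtain ⟨k, h1, h2⟩ := exists_annulus hd hy
      exact mem_iUnion.2 ⟨k, h1, by rwa [mem_ball, dist_comm]⟩
    have hterm : ∀ k : ℕ,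
        (∫⁻ y in A k, ENNReal.ofReal (1 / dist x0 y ^ r)) ≤
          q ^ k * (ENNReal.ofReal 2 ^ n * B * ENNReal.ofReal (1 / d ^ t)) := by
      intro k
      have hpk : (0:ℝ) < 2 ^ k * d := by positivity
      calc (∫⁻ y in A k, ENNReal.ofReal (1 / dist x0 y ^ r))
          ≤ ∫⁻ _ in A k, ENNReal.ofReal (1 / ((2:ℝ) ^ k * d) ^ r) := by
            refine setLIntegral_mono measurable_const fun y hy => ?_
            refine ENNReal.ofReal_le_ofReal ?_
            refine one_div_le_one_div_of_le (by positivity) ?_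
            exact Real.rpow_le_rpow hpk.le hy.1 (by positivity)
        _ = ENNReal.ofReal (1 / ((2:ℝ) ^ k * d) ^ r) * volume (A k) :=
            setLIntegral_const _ _
        _ ≤ ENNReal.ofReal (1 / ((2:ℝ) ^ k * d) ^ r) *
              volume (ball x0 (2 ^ (k + 1) * d)) := by
            exact mul_le_mul_right (measure_mono fun y hy => hy.2) _
        _ = ENNReal.ofReal (1 / ((2:ℝ) ^ k * d) ^ r) *
              (ENNReal.ofReal (((2:ℝ) ^ (k + 1) * d) ^ Module.finrank ℝ (Euc n)) * B) := by
            rw [Measure.addHaar_ball _ _ (by positivity)]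
        _ = q ^ k * (ENNReal.ofReal 2 ^ n * B * ENNReal.ofReal (1 / d ^ t)) := by
            rw [finrank_euclideanSpace_fin, ← mul_assoc,
              ← ENNReal.ofReal_mul (by positivity), pow_calc n k hd,
              ENNReal.ofReal_mul (by positivity), ENNReal.ofReal_mul (by positivity),
              ENNReal.ofReal_pow (by norm_num : (0:ℝ) ≤ 2) n,
              ENNReal.ofReal_pow (p := (2:ℝ) ^ (-t)) (by positivity) k, ← hqdef]
            ring
    calc (∫⁻ y in {y : Euc n | d ≤ dist x0 y}, ENNReal.ofReal (1 / dist x0 y ^ r))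
        ≤ ∫⁻ y in ⋃ k, A k, ENNReal.ofReal (1 / dist x0 y ^ r) :=
          lintegral_mono_set hsub
      _ ≤ ∑' k, ∫⁻ y in A k, ENNReal.ofReal (1 / dist x0 y ^ r) :=
          lintegral_iUnion_le _ _
      _ ≤ ∑' k, q ^ k * (ENNReal.ofReal 2 ^ n * B * ENNReal.ofReal (1 / d ^ t)) :=
          ENNReal.tsum_le_tsum hterm
      _ = (∑' k : ℕ, q ^ k) * (ENNReal.ofReal 2 ^ n * B) * ENNReal.ofReal (1 / d ^ t) := by
          rw [ENNReal.tsum_mul_right, ← mul_assoc]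

/-- Let `0<s<1`, `1<p<∞`, and let `G ⊊ ℝⁿ` be open. There is `C > 0`,
depending only on `n, s, p`, such that the zero extension `E_G u` of any
`u ∈ W^{s,p}(G)` satisfies
`|E_G u|_{W^{s,p}(ℝⁿ)}^p ≤ |u|_{W^{s,p}(G)}^p + C ∫_G |u(x)|^p dist(x,∂G)^{-sp} dx`. -/
theorem statement15 (n : ℕ) (s p : ℝ) (hs0 : 0 < s) (hs1 : s < 1) (hp1 : 1 < p) :
    ∃ C : ℝ, 0 < C ∧ ∀ (G : Set (Euc n)), IsOpen G → G ≠ Set.univ →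
      ∀ u : Euc n → ℝ,
        MemLp u (ENNReal.ofReal p) (volume.restrict G) →
        gagliardoP n s p G u ≠ ⊤ →
        gagliardoP n s p Set.univ (G.indicator u) ≤
          gagliardoP n s p G u + ENNReal.ofReal C *
            ∫⁻ x in G, ENNReal.ofReal
              (|u x| ^ p / Metric.infDist x (frontier G) ^ (s * p)) := by
  have hp0 : (0:ℝ) < p := by linarith
  have ht : (0:ℝ) < s * p := by positivity
  have hr0 : (0:ℝ) ≤ (n:ℝ) + s * p := by positivity
  obtain ⟨C₀, hC₀top, hC₀⟩ := keyA n (s * p) ht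
  refine ⟨2 * C₀.toReal + 1, by positivity, ?_⟩
  intro G hGopen hGne u hu hfin
  rcases G.eq_empty_or_nonempty with rfl | ⟨z₀, hz₀⟩
  · simp only [Set.indicator_empty]
    have h0 : gagliardoP n s p Set.univ (fun _ => (0:ℝ)) = 0 := by
      unfold gagliardoP
      simp [Real.zero_rpow hp0.ne']
    rw [h0]
    exact zero_le
  have hGm : MeasurableSet G := hGopen.measurableSet
  -- measurable representative
  obtain ⟨v, hvmeas, huv⟩ : ∃ v : Euc n → ℝ, Measurable v ∧ u =ᵐ[volume.restrict G] v :=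
    ⟨hu.aestronglyMeasurable.mk u, hu.aestronglyMeasurable.stronglyMeasurable_mk.measurable,
      hu.aestronglyMeasurable.ae_eq_mk⟩
  set r : ℝ := (n:ℝ) + s * p with hrdef
  have e1 : gagliardoP n s p G u = gagliardoP n s p G v := by
    unfold gagliardoP
    refine lintegral_congr_ae ?_
    filter_upwards [huv] with x hx
    refine lintegral_congr_ae ?_
    filter_upwards [huv] with y hy
    rw [hx, hy]
  have e2 : (∫⁻ x in G, ENNReal.ofReal
        (|u x| ^ p / Metric.infDist x (frontier G) ^ (s * p)))
      = ∫⁻ x in G, ENNReal.ofReal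
        (|v x| ^ p / Metric.infDist x (frontier G) ^ (s * p)) := by
    refine lintegral_congr_ae ?_
    filter_upwards [huv] with x hx
    rw [hx]
  have hind : G.indicator u =ᵐ[volume] G.indicator v :=
    (ae_eq_restrict_iff_indicator_ae_eq hGm).1 huv
  have e3 : gagliardoP n s p Set.univ (G.indicator u)
      = gagliardoP n s p Set.univ (G.indicator v) := by
    unfold gagliardoP
    refine lintegral_congr_ae ?_
    have hind' := hind.restrict (s := Set.univ)
    filter_upwards [hind'] with x hx
    refine lintegral_congr_ae ?_
    filter_upwards [hind.restrict (s := Set.univ)] with y hy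
    rw [hx, hy]
  rw [e1, e2, e3]
  clear e1 e2 e3 hind huv hu hfin
  set w : Euc n → ℝ := G.indicator v with hwdef
  have hwm : Measurable w := hvmeas.indicator hGm
  -- boundary distance facts
  have hfrne : (frontier G).Nonempty := by
    obtain ⟨z, hz, -⟩ := exists_mem_frontier_infDist_compl_eq_dist hz₀ hGne
    exact ⟨z, hz⟩
  have hdpos : ∀ x ∈ G, 0 < infDist x (frontier G) := by
    intro x hx
    refine (isClosed_frontier.notMem_iff_infDist_pos hfrne).1 ?_
    rw [hGopen.frontier_eq]
    exact fun h => h.2 hx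
  have hfront : ∀ x ∈ G, ∀ y, y ∉ G → infDist x (frontier G) ≤ dist x y := by
    intro x hx y hy
    obtain ⟨z, hz, hzd⟩ := exists_mem_frontier_infDist_compl_eq_dist hx hGne
    calc infDist x (frontier G) ≤ dist x z := infDist_le_dist_of_mem hz
      _ = infDist x Gᶜ := hzd.symm
      _ ≤ dist x y := infDist_le_dist_of_mem hy
  -- the key outer bound
  have houter : ∀ x ∈ G, ∀ a : ℝ, 0 ≤ a →
      (∫⁻ y in Gᶜ, ENNReal.ofReal (a / dist x y ^ r)) ≤
        C₀ * ENNReal.ofReal (a / infDist x (frontier G) ^ (s * p)) := by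
    intro x hx a ha
    have hd := hdpos x hx
    calc (∫⁻ y in Gᶜ, ENNReal.ofReal (a / dist x y ^ r))
        ≤ ∫⁻ y in {y : Euc n | infDist x (frontier G) ≤ dist x y},
            ENNReal.ofReal (a / dist x y ^ r) :=
          lintegral_mono_set (fun y hy => hfront x hx y hy)
      _ = ∫⁻ y in {y : Euc n | infDist x (frontier G) ≤ dist x y},
            ENNReal.ofReal a * ENNReal.ofReal (1 / dist x y ^ r) := by
          refine lintegral_congr fun y => ?_
          rw [← ENNReal.ofReal_mul ha, mul_one_div]
      _ = ENNReal.ofReal a * ∫⁻ y in {y : Euc n | infDist x (frontier G) ≤ dist x y},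
            ENNReal.ofReal (1 / dist x y ^ r) :=
          lintegral_const_mul' _ _ ENNReal.ofReal_ne_top
      _ ≤ ENNReal.ofReal a *
            (C₀ * ENNReal.ofReal (1 / infDist x (frontier G) ^ (s * p))) :=
          mul_le_mul_right (hC₀ x _ hd) _
      _ = C₀ * ENNReal.ofReal (a / infDist x (frontier G) ^ (s * p)) := by
          rw [← mul_assoc, mul_comm (ENNReal.ofReal a) C₀, mul_assoc,
            ← ENNReal.ofReal_mul ha, mul_one_div]
  -- measurability of the double integrand
  have hFm : Measurable fun q : Euc n × Euc n =>
      ENNReal.ofReal (|w q.1 - w q.2| ^ p / dist q.1 q.2 ^ r) := by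
    refine Measurable.ennreal_ofReal (Measurable.div ?_ ?_)
    · exact (Real.continuous_rpow_const hp0.le).measurable.comp
        (((hwm.comp measurable_fst).sub (hwm.comp measurable_snd)).abs)
    · exact (Real.continuous_rpow_const hr0).measurable.comp continuous_dist.measurable
  have hHm : Measurable fun q : Euc n × Euc n =>
      ENNReal.ofReal (|v q.2| ^ p / dist q.1 q.2 ^ r) := by
    refine Measurable.ennreal_ofReal (Measurable.div ?_ ?_)
    · exact (Real.continuous_rpow_const hp0.le).measurable.comp
        ((hvmeas.comp measurable_snd).abs)
    · exact (Real.continuous_rpow_const hr0).measurable.comp continuous_dist.measurable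
  set I : ℝ≥0∞ :=
    ∫⁻ x in G, ENNReal.ofReal (|v x| ^ p / infDist x (frontier G) ^ (s * p)) with hI
  -- Term over G × Gᶜ
  have hterm12 : (∫⁻ x in G, ∫⁻ y in Gᶜ,
      ENNReal.ofReal (|w x - w y| ^ p / dist x y ^ r)) ≤ C₀ * I := by
    calc (∫⁻ x in G, ∫⁻ y in Gᶜ, ENNReal.ofReal (|w x - w y| ^ p / dist x y ^ r))
        ≤ ∫⁻ x in G, C₀ * ENNReal.ofReal (|v x| ^ p / infDist x (frontier G) ^ (s * p)) := by
          refine setLIntegral_mono' hGm fun x hx => ?_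
          have : (∫⁻ y in Gᶜ, ENNReal.ofReal (|w x - w y| ^ p / dist x y ^ r))
              = ∫⁻ y in Gᶜ, ENNReal.ofReal (|v x| ^ p / dist x y ^ r) := by
            refine setLIntegral_congr_fun hGm.compl (fun y hy => ?_)
            rw [hwdef, indicator_of_mem hx, indicator_of_notMem hy, sub_zero]
          rw [this]
          exact houter x hx (|v x| ^ p) (by positivity)
      _ = C₀ * I := lintegral_const_mul' _ _ hC₀top
  -- Term over Gᶜ × univ
  have hterm2 : (∫⁻ x in Gᶜ, ∫⁻ y,
      ENNReal.ofReal (|w x - w y| ^ p / dist x y ^ r)) ≤ C₀ * I := by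
    have hrw : ∀ x, x ∉ G → (∫⁻ y, ENNReal.ofReal (|w x - w y| ^ p / dist x y ^ r))
        = ∫⁻ y in G, ENNReal.ofReal (|v y| ^ p / dist x y ^ r) := by
      intro x hx
      rw [← lintegral_indicator hGm]
      refine lintegral_congr fun y => ?_
      by_cases hy : y ∈ G
      · rw [indicator_of_mem hy, hwdef, indicator_of_notMem hx, indicator_of_mem hy,
          zero_sub, abs_neg]
      · rw [indicator_of_notMem hy, hwdef, indicator_of_notMem hx, indicator_of_notMem hy,
          sub_zero, abs_zero, Real.zero_rpow hp0.ne', zero_div, ENNReal.ofReal_zero]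
    calc (∫⁻ x in Gᶜ, ∫⁻ y, ENNReal.ofReal (|w x - w y| ^ p / dist x y ^ r))
        = ∫⁻ x in Gᶜ, ∫⁻ y in G, ENNReal.ofReal (|v y| ^ p / dist x y ^ r) :=
          setLIntegral_congr_fun hGm.compl (fun x hx => hrw x hx)
      _ = ∫⁻ y in G, ∫⁻ x in Gᶜ, ENNReal.ofReal (|v y| ^ p / dist x y ^ r) :=
          lintegral_lintegral_swap hHm.aemeasurable
      _ ≤ ∫⁻ y in G, C₀ * ENNReal.ofReal (|v y| ^ p / infDist y (frontier G) ^ (s * p)) := by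
          refine setLIntegral_mono' hGm fun y hy => ?_
          have : (∫⁻ x in Gᶜ, ENNReal.ofReal (|v y| ^ p / dist x y ^ r))
              = ∫⁻ x in Gᶜ, ENNReal.ofReal (|v y| ^ p / dist y x ^ r) := by
            refine lintegral_congr fun x => ?_
            rw [dist_comm]
          rw [this]
          exact houter y hy (|v y| ^ p) (by positivity)
      _ = C₀ * I := lintegral_const_mul' _ _ hC₀top
  -- assemble
  have hsplit : gagliardoP n s p Set.univ w
      = (∫⁻ x in G, ∫⁻ y in G, ENNReal.ofReal (|w x - w y| ^ p / dist x y ^ r))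
        + (∫⁻ x in G, ∫⁻ y in Gᶜ, ENNReal.ofReal (|w x - w y| ^ p / dist x y ^ r))
        + (∫⁻ x in Gᶜ, ∫⁻ y, ENNReal.ofReal (|w x - w y| ^ p / dist x y ^ r)) := by
    unfold gagliardoP
    rw [Measure.restrict_univ]
    rw [← lintegral_add_compl (fun x => ∫⁻ y, ENNReal.ofReal (|w x - w y| ^ p / dist x y ^ r)) hGm]
    congr 1
    calc (∫⁻ x in G, ∫⁻ y, ENNReal.ofReal (|w x - w y| ^ p / dist x y ^ r))
        = ∫⁻ x in G, ((∫⁻ y in G, ENNReal.ofReal (|w x - w y| ^ p / dist x y ^ r))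
            + ∫⁻ y in Gᶜ, ENNReal.ofReal (|w x - w y| ^ p / dist x y ^ r)) :=
          lintegral_congr fun x => (lintegral_add_compl _ hGm).symm
      _ = _ := lintegral_add_left (Measurable.lintegral_prod_right
          (f := fun x y => ENNReal.ofReal (|w x - w y| ^ p / dist x y ^ r)) hFm) _
  have eT11 : (∫⁻ x in G, ∫⁻ y in G, ENNReal.ofReal (|w x - w y| ^ p / dist x y ^ r))
      = gagliardoP n s p G v := by
    unfold gagliardoP
    refine setLIntegral_congr_fun hGm (fun x hx => ?_)
    refine setLIntegral_congr_fun hGm (fun y hy => ?_)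
    rw [hwdef, indicator_of_mem hx, indicator_of_mem hy]
  have hCfin : C₀ + C₀ ≤ ENNReal.ofReal (2 * C₀.toReal + 1) := by
    conv_lhs => rw [← ENNReal.ofReal_toReal hC₀top]
    rw [← ENNReal.ofReal_add ENNReal.toReal_nonneg ENNReal.toReal_nonneg]
    exact ENNReal.ofReal_le_ofReal (by linarith [ENNReal.toReal_nonneg (a := C₀)])
  calc gagliardoP n s p Set.univ w
      = _ := hsplit
    _ ≤ gagliardoP n s p G v + C₀ * I + C₀ * I :=
        add_le_add (add_le_add (le_of_eq eT11) hterm12) hterm2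
    _ = gagliardoP n s p G v + (C₀ + C₀) * I := by rw [add_assoc, ← add_mul]
    _ ≤ gagliardoP n s p G v + ENNReal.ofReal (2 * C₀.toReal + 1) * I :=
        add_le_add_right (mul_le_mul_left hCfin _) _


end
end

section
/- Let 1<p<∞ and 0<s<1 be such that sp<n, and let G ⊊ ℝⁿ be an open set, n ≥ 2. If G admits the (s,p)-Hardy inequality, then the zero extension operator E_G is bounded, i.e. there is c₁>0 such that |E_G u|_{W^{s,p}(ℝⁿ)}^p ≤ c₁ |u|_{W^{s,p}(G)}^p for every u ∈ C_c^∞(G). -/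
open MeasureTheory Metric Set
open scoped ENNReal NNReal Topology

noncomputable section

open Module in
lemma meas_radial (n : ℕ) (α : ℝ) (x : Euc n) :
    Measurable (fun y : Euc n => ENNReal.ofReal (dist x y ^ (-α))) :=
  by fun_prop

lemma K_lt_top (n : ℕ) (α : ℝ) (hα : (n : ℝ) < α) :
    (∫⁻ z in (ball (0 : Euc n) 1)ᶜ, ENNReal.ofReal (‖z‖ ^ (-α))) < ∞ := by
  have hα0 : 0 ≤ α := le_trans (Nat.cast_nonneg n) hα.le
  have hbd : ∀ z ∈ (ball (0 : Euc n) 1)ᶜ,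
      ENNReal.ofReal (‖z‖ ^ (-α)) ≤ ENNReal.ofReal ((2:ℝ) ^ α * (1 + ‖z‖) ^ (-α)) := by
    intro z hz
    have h1 : (1:ℝ) ≤ ‖z‖ := by
      simpa [dist_eq_norm] using (mem_ball.not.mp hz)
    apply ENNReal.ofReal_le_ofReal
    have hz0 : (0:ℝ) < ‖z‖ := lt_of_lt_of_le one_pos h1
    have h3 : (1 + ‖z‖) ^ α ≤ (2 * ‖z‖) ^ α :=
      Real.rpow_le_rpow (by linarith) (by linarith) hα0
    have h4 : (((2:ℝ) * ‖z‖) ^ α)⁻¹ ≤ ((1 + ‖z‖) ^ α)⁻¹ := by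
      apply inv_anti₀ (Real.rpow_pos_of_pos (by linarith) α) h3
    rw [Real.mul_rpow (by norm_num) hz0.le, mul_inv] at h4
    rw [Real.rpow_neg hz0.le, Real.rpow_neg (by linarith : (0:ℝ) ≤ 1 + ‖z‖)]
    calc (‖z‖ ^ α)⁻¹ = (2:ℝ) ^ α * (((2:ℝ) ^ α)⁻¹ * (‖z‖ ^ α)⁻¹) := by
          rw [← mul_assoc, mul_inv_cancel₀ (ne_of_gt (Real.rpow_pos_of_pos two_pos α)), one_mul]
      _ ≤ (2:ℝ) ^ α * ((1 + ‖z‖) ^ α)⁻¹ :=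
          mul_le_mul_of_nonneg_left h4 (Real.rpow_pos_of_pos two_pos α).le
  have hmeas : Measurable fun z : Euc n => ENNReal.ofReal ((2:ℝ) ^ α * (1 + ‖z‖) ^ (-α)) := by
    fun_prop
  calc (∫⁻ z in (ball (0 : Euc n) 1)ᶜ, ENNReal.ofReal (‖z‖ ^ (-α)))
      ≤ ∫⁻ z in (ball (0 : Euc n) 1)ᶜ, ENNReal.ofReal ((2:ℝ) ^ α * (1 + ‖z‖) ^ (-α)) :=
        setLIntegral_mono hmeas hbd
    _ ≤ ∫⁻ z : Euc n, ENNReal.ofReal ((2:ℝ) ^ α * (1 + ‖z‖) ^ (-α)) :=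
        setLIntegral_le_lintegral _ _
    _ = ENNReal.ofReal ((2:ℝ) ^ α) * ∫⁻ z : Euc n, ENNReal.ofReal ((1 + ‖z‖) ^ (-α)) := by
        simp_rw [ENNReal.ofReal_mul (Real.rpow_pos_of_pos two_pos α).le]
        exact lintegral_const_mul _ (by fun_prop)
    _ < ∞ := by
        apply ENNReal.mul_lt_top ENNReal.ofReal_lt_top
        apply finite_integral_one_add_norm
        rwa [finrank_euclideanSpace, Fintype.card_fin]

open Module in
lemma exterior_integral (n : ℕ) (α : ℝ) (x : Euc n) (D : ℝ) (hD : 0 < D) :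
    ∫⁻ y in (ball x D)ᶜ, ENNReal.ofReal (dist x y ^ (-α)) =
      ENNReal.ofReal (D ^ ((n:ℝ) - α)) *
        ∫⁻ z in (ball (0 : Euc n) 1)ᶜ, ENNReal.ofReal (‖z‖ ^ (-α)) := by
  have hmeas : ∀ c : Euc n, Measurable (fun y : Euc n => ENNReal.ofReal (dist c y ^ (-α))) := by
    intro c; fun_prop
  -- translation
  have h1 : ∫⁻ y in (ball x D)ᶜ, ENNReal.ofReal (dist x y ^ (-α)) =
      ∫⁻ z in (ball (0 : Euc n) D)ᶜ, ENNReal.ofReal (‖z‖ ^ (-α)) := by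
    have hmp : Measure.map (fun z : Euc n => x + z) volume = volume :=
      map_add_left_eq_self volume x
    have hset : (fun z : Euc n => x + z) ⁻¹' (ball x D)ᶜ = (ball (0 : Euc n) D)ᶜ := by
      ext z
      simp [mem_ball, dist_eq_norm]
    calc ∫⁻ y in (ball x D)ᶜ, ENNReal.ofReal (dist x y ^ (-α)) ∂volume
        = ∫⁻ y in (ball x D)ᶜ, ENNReal.ofReal (dist x y ^ (-α))
            ∂(Measure.map (fun z : Euc n => x + z) volume) := by rw [hmp]
      _ = ∫⁻ z in (fun z : Euc n => x + z) ⁻¹' (ball x D)ᶜ,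
            ENNReal.ofReal (dist x (x + z) ^ (-α)) ∂volume :=
          setLIntegral_map measurableSet_ball.compl (hmeas x)
            (by fun_prop : Measurable fun z : Euc n => x + z)
      _ = ∫⁻ z in (ball (0 : Euc n) D)ᶜ, ENNReal.ofReal (‖z‖ ^ (-α)) ∂volume := by
          rw [hset]
          refine lintegral_congr fun z => ?_
          congr 2
          rw [dist_eq_norm]
          simp
  rw [h1]
  -- scaling
  have hsm : Measurable (fun w : Euc n => D • w) := measurable_const_smul D
  have hmap := Measure.map_addHaar_smul (volume : Measure (Euc n)) (ne_of_gt hD)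
  have hfr : finrank ℝ (Euc n) = n := by rw [finrank_euclideanSpace, Fintype.card_fin]
  rw [hfr] at hmap
  have key : ∫⁻ z in (ball (0:Euc n) D)ᶜ, ENNReal.ofReal (‖z‖ ^ (-α))
        ∂(Measure.map (fun w : Euc n => D • w) volume) =
      ENNReal.ofReal ((D ^ n)⁻¹) *
        ∫⁻ z in (ball (0:Euc n) D)ᶜ, ENNReal.ofReal (‖z‖ ^ (-α)) := by
    rw [hmap]
    have : |(D ^ n)⁻¹| = (D ^ n)⁻¹ := abs_of_pos (by positivity)
    rw [this]
    simp [lintegral_smul_measure]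
  have key2 : ∫⁻ z in (ball (0:Euc n) D)ᶜ, ENNReal.ofReal (‖z‖ ^ (-α))
        ∂(Measure.map (fun w : Euc n => D • w) volume) =
      ENNReal.ofReal (D ^ (-α)) *
        ∫⁻ w in (ball (0 : Euc n) 1)ᶜ, ENNReal.ofReal (‖w‖ ^ (-α)) := by
    rw [setLIntegral_map measurableSet_ball.compl (by fun_prop) hsm]
    have hset : (fun w : Euc n => D • w) ⁻¹' (ball (0:Euc n) D)ᶜ = (ball (0 : Euc n) 1)ᶜ := by
      ext w
      simp only [mem_preimage, mem_compl_iff, mem_ball, dist_zero_right, not_lt, norm_smul,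
        Real.norm_eq_abs, abs_of_pos hD]
      constructor
      · intro h; nlinarith [norm_nonneg w]
      · intro h; nlinarith
    rw [hset, ← lintegral_const_mul _ (by fun_prop : Measurable fun w : Euc n =>
      ENNReal.ofReal (‖w‖ ^ (-α)))]
    refine lintegral_congr fun w => ?_
    rw [norm_smul, Real.norm_eq_abs, abs_of_pos hD,
      Real.mul_rpow hD.le (norm_nonneg w),
      ENNReal.ofReal_mul (Real.rpow_nonneg hD.le _)]
  have hDn : ENNReal.ofReal ((D ^ n)⁻¹) ≠ 0 := by
    simp [ENNReal.ofReal_eq_zero, not_le]; positivity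
  have heq := key.symm.trans key2
  -- solve for the integral
  have : ∫⁻ z in (ball (0:Euc n) D)ᶜ, ENNReal.ofReal (‖z‖ ^ (-α)) =
      ENNReal.ofReal (D ^ n) * (ENNReal.ofReal (D ^ (-α)) *
        ∫⁻ w in (ball (0 : Euc n) 1)ᶜ, ENNReal.ofReal (‖w‖ ^ (-α))) := by
    rw [← heq, ← mul_assoc, ← ENNReal.ofReal_mul (by positivity)]
    rw [mul_inv_cancel₀ (by positivity : (D:ℝ) ^ n ≠ 0)]
    simp
  rw [this, ← mul_assoc, ← ENNReal.ofReal_mul (by positivity)]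
  congr 2
  rw [← Real.rpow_natCast D n, ← Real.rpow_add hD]
  ring_nf

lemma cross_pointwise (n : ℕ) {s p : ℝ} (hs0 : 0 < s) (hp1 : 1 < p)
    {G : Set (Euc n)} (hGopen : IsOpen G) (hGproper : G ≠ Set.univ)
    (u : Euc n → ℝ) {x : Euc n} (hx : x ∈ G) :
    (∫⁻ y in Gᶜ, ENNReal.ofReal (|u x| ^ p / dist x y ^ ((n:ℝ) + s * p))) ≤
      (∫⁻ z in (ball (0 : Euc n) 1)ᶜ, ENNReal.ofReal (‖z‖ ^ (-((n:ℝ) + s * p)))) *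
        ENNReal.ofReal (|u x| ^ p / Metric.infDist x (frontier G) ^ (s * p)) := by
  set α : ℝ := (n:ℝ) + s * p with hα
  set K := ∫⁻ z in (ball (0 : Euc n) 1)ᶜ, ENNReal.ofReal (‖z‖ ^ (-α)) with hK
  set D := Metric.infDist x Gᶜ with hD
  set d' := Metric.infDist x (frontier G) with hd'
  obtain ⟨y₀, hy₀f, hy₀d⟩ := exists_mem_frontier_infDist_compl_eq_dist hx hGproper
  have hDpos : 0 < D := by
    rw [hD]
    refine ((IsClosed.notMem_iff_infDist_pos hGopen.isClosed_compl
      (nonempty_compl.2 hGproper)).mp ?_)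
    simpa using hx
  have hxnf : x ∉ frontier G := by
    rw [hGopen.frontier_eq]
    exact fun h => h.2 hx
  have hd'pos : 0 < d' :=
    (IsClosed.notMem_iff_infDist_pos isClosed_frontier ⟨y₀, hy₀f⟩).mp hxnf
  have hd'D : d' ≤ D := by
    rw [hd', hD, hy₀d]
    exact infDist_le_dist_of_mem hy₀f
  have hup : 0 ≤ |u x| ^ p := Real.rpow_nonneg (abs_nonneg _) p
  have hsub : Gᶜ ⊆ (ball x D)ᶜ := by
    intro y hy
    simp only [mem_compl_iff, mem_ball, not_lt]
    calc D ≤ dist x y := infDist_le_dist_of_mem hy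
      _ = dist y x := dist_comm x y
  calc (∫⁻ y in Gᶜ, ENNReal.ofReal (|u x| ^ p / dist x y ^ α))
      = ∫⁻ y in Gᶜ, ENNReal.ofReal (|u x| ^ p) * ENNReal.ofReal (dist x y ^ (-α)) := by
        refine lintegral_congr fun y => ?_
        rw [← ENNReal.ofReal_mul hup, div_eq_mul_inv, Real.rpow_neg dist_nonneg]
    _ = ENNReal.ofReal (|u x| ^ p) * ∫⁻ y in Gᶜ, ENNReal.ofReal (dist x y ^ (-α)) :=
        lintegral_const_mul _ (by fun_prop)
    _ ≤ ENNReal.ofReal (|u x| ^ p) * ∫⁻ y in (ball x D)ᶜ, ENNReal.ofReal (dist x y ^ (-α)) := by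
        gcongr
    _ = ENNReal.ofReal (|u x| ^ p) * (ENNReal.ofReal (D ^ ((n:ℝ) - α)) * K) := by
        rw [exterior_integral n α x D hDpos]
    _ ≤ ENNReal.ofReal (|u x| ^ p) * (ENNReal.ofReal (d' ^ ((n:ℝ) - α)) * K) := by
        refine mul_le_mul_right (mul_le_mul_left (ENNReal.ofReal_le_ofReal ?_) K) _
        apply Real.rpow_le_rpow_of_nonpos hd'pos hd'D
        rw [hα]; nlinarith
    _ = K * ENNReal.ofReal (|u x| ^ p / d' ^ (s * p)) := by
        have h1 : (n:ℝ) - α = -(s*p) := by rw [hα]; ring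
        have h2 : ENNReal.ofReal (|u x| ^ p / d' ^ (s * p)) =
            ENNReal.ofReal (|u x| ^ p) * ENNReal.ofReal (d' ^ (-(s * p))) := by
          rw [Real.rpow_neg hd'pos.le, ← ENNReal.ofReal_mul hup, div_eq_mul_inv]
        rw [h1, h2]; ring


/-- Let `1<p<∞`, `0<s<1` with `sp<n`, and let `G ⊊ ℝⁿ` be open, `n ≥ 2`.
If `G` admits the `(s,p)`-Hardy inequality, then the zero extension operator `E_G` is
bounded: there is `c₁>0` with `|E_G u|_{W^{s,p}(ℝⁿ)}^p ≤ c₁ |u|_{W^{s,p}(G)}^p` for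
every `u ∈ C_c^∞(G)`. -/
theorem statement18 (n : ℕ) (hn : 2 ≤ n) (s p : ℝ) (hs0 : 0 < s) (hs1 : s < 1)
    (hp1 : 1 < p) (hspn : s * p < n)
    (G : Set (Euc n)) (hGopen : IsOpen G) (hGproper : G ≠ Set.univ)
    (hHardy : AdmitsHardy n s p G) :
    ∃ c₁ : ℝ, 0 < c₁ ∧ ∀ u : Euc n → ℝ,
      ContDiff ℝ (⊤ : ℕ∞) u → HasCompactSupport u → tsupport u ⊆ G →
      gagliardoP n s p Set.univ (G.indicator u) ≤
        ENNReal.ofReal c₁ * gagliardoP n s p G u := by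
  obtain ⟨c, hc, hHc⟩ := hHardy
  set α : ℝ := (n : ℝ) + s * p with hαdef
  have hαn : (n : ℝ) < α := by
    have : 0 < s * p := by nlinarith
    simp [hαdef]; linarith
  set K := ∫⁻ z in (ball (0 : Euc n) 1)ᶜ, ENNReal.ofReal (‖z‖ ^ (-α)) with hKdef
  have hKfin : K < ∞ := K_lt_top n α hαn
  set κ : ℝ := K.toReal with hκdef
  have hκ0 : 0 ≤ κ := ENNReal.toReal_nonneg
  have hKeq : K = ENNReal.ofReal κ := by rw [hκdef, ENNReal.ofReal_toReal hKfin.ne]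
  refine ⟨1 + 2 * (κ * c), by positivity, ?_⟩
  intro u hu hcu htu
  set Eu := G.indicator u with hEu
  have hMG : MeasurableSet G := hGopen.measurableSet
  have hum : Measurable u := hu.continuous.measurable
  have hEum : Measurable Eu := hum.indicator hMG
  have hrp : Measurable fun t : ℝ => t ^ p := by fun_prop
  have hrα : Measurable fun t : ℝ => t ^ α := by fun_prop
  have hF : Measurable fun q : Euc n × Euc n =>
      ENNReal.ofReal (|Eu q.1 - Eu q.2| ^ p / dist q.1 q.2 ^ α) := by
    apply ENNReal.measurable_ofReal.comp
    exact (hrp.comp ((hEum.comp measurable_fst).sub (hEum.comp measurable_snd)).abs).div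
      (hrα.comp measurable_dist)
  set F : Euc n → Euc n → ℝ≥0∞ :=
    fun x y => ENNReal.ofReal (|Eu x - Eu y| ^ p / dist x y ^ α) with hFdef
  set g := fun x => ∫⁻ y, F x y with hgdef
  -- pieces
  have hT1 : (∫⁻ x in G, ∫⁻ y in G, F x y) = gagliardoP n s p G u := by
    rw [gagliardoP]
    refine setLIntegral_congr_fun hMG (fun x hx => ?_)
    refine setLIntegral_congr_fun hMG (fun y hy => ?_)
    rw [hFdef]
    simp only [hEu, indicator_of_mem hx, indicator_of_mem hy, hαdef]
  have crossBound : ∀ v : Euc n → ℝ, Measurable v →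
      (∫⁻ x in G, ∫⁻ y in Gᶜ, ENNReal.ofReal (|v x| ^ p / dist x y ^ α)) ≤
        K * ∫⁻ x in G, ENNReal.ofReal (|v x| ^ p / Metric.infDist x (frontier G) ^ (s * p)) := by
    intro v hv
    have hmono : ∀ x ∈ G,
        (∫⁻ y in Gᶜ, ENNReal.ofReal (|v x| ^ p / dist x y ^ α)) ≤
          K * ENNReal.ofReal (|v x| ^ p / Metric.infDist x (frontier G) ^ (s * p)) :=
      fun x hx => cross_pointwise n hs0 hp1 hGopen hGproper v hx
    calc (∫⁻ x in G, ∫⁻ y in Gᶜ, ENNReal.ofReal (|v x| ^ p / dist x y ^ α))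
        ≤ ∫⁻ x in G, K * ENNReal.ofReal (|v x| ^ p / Metric.infDist x (frontier G) ^ (s * p)) := by
          refine setLIntegral_mono ?_ hmono
          apply Measurable.const_mul
          apply ENNReal.measurable_ofReal.comp
          exact (hrp.comp hv.abs).div ((by fun_prop : Measurable fun t : ℝ => t ^ (s*p)).comp
            (continuous_infDist_pt _).measurable)
      _ = K * ∫⁻ x in G, ENNReal.ofReal (|v x| ^ p / Metric.infDist x (frontier G) ^ (s * p)) := by
          apply lintegral_const_mul
          apply ENNReal.measurable_ofReal.comp
          exact (hrp.comp hv.abs).div ((by fun_prop : Measurable fun t : ℝ => t ^ (s*p)).comp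
            (continuous_infDist_pt _).measurable)
  have hHardyU : (∫⁻ x in G, ENNReal.ofReal (|u x| ^ p / Metric.infDist x (frontier G) ^ (s * p)))
      ≤ ENNReal.ofReal c * gagliardoP n s p G u := hHc u hu hcu htu
  -- T2
  have hT2 : (∫⁻ x in G, ∫⁻ y in Gᶜ, F x y) ≤
      K * (ENNReal.ofReal c * gagliardoP n s p G u) := by
    have heq : (∫⁻ x in G, ∫⁻ y in Gᶜ, F x y) =
        ∫⁻ x in G, ∫⁻ y in Gᶜ, ENNReal.ofReal (|u x| ^ p / dist x y ^ α) := by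
      refine setLIntegral_congr_fun hMG (fun x hx => ?_)
      refine setLIntegral_congr_fun hMG.compl (fun y hy => ?_)
      rw [hFdef]
      simp only [hEu, indicator_of_mem hx, indicator_of_notMem (notMem_of_mem_compl hy),
        sub_zero]
    rw [heq]
    exact le_trans (crossBound u hum) (mul_le_mul_right hHardyU K)
  -- T3 via swap
  have hT3 : (∫⁻ x in Gᶜ, ∫⁻ y in G, F x y) ≤
      K * (ENNReal.ofReal c * gagliardoP n s p G u) := by
    have heq : (∫⁻ x in Gᶜ, ∫⁻ y in G, F x y) =
        ∫⁻ x in Gᶜ, ∫⁻ y in G, ENNReal.ofReal (|u y| ^ p / dist x y ^ α) := by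
      refine setLIntegral_congr_fun hMG.compl (fun x hx => ?_)
      refine setLIntegral_congr_fun hMG (fun y hy => ?_)
      rw [hFdef]
      simp only [hEu, indicator_of_mem hy, indicator_of_notMem (notMem_of_mem_compl hx),
        zero_sub, abs_neg]
    have hswap : (∫⁻ x in Gᶜ, ∫⁻ y in G, ENNReal.ofReal (|u y| ^ p / dist x y ^ α)) =
        ∫⁻ y in G, ∫⁻ x in Gᶜ, ENNReal.ofReal (|u y| ^ p / dist x y ^ α) := by
      apply lintegral_lintegral_swap
      apply Measurable.aemeasurable
      apply ENNReal.measurable_ofReal.comp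
      exact (hrp.comp ((hum.comp measurable_snd).abs)).div (hrα.comp measurable_dist)
    have hsym : (∫⁻ y in G, ∫⁻ x in Gᶜ, ENNReal.ofReal (|u y| ^ p / dist x y ^ α)) =
        ∫⁻ y in G, ∫⁻ x in Gᶜ, ENNReal.ofReal (|u y| ^ p / dist y x ^ α) := by
      refine lintegral_congr fun y => lintegral_congr fun x => by rw [dist_comm]
    rw [heq, hswap, hsym]
    exact le_trans (crossBound u hum) (mul_le_mul_right hHardyU K)
  have hT4 : (∫⁻ x in Gᶜ, ∫⁻ y in Gᶜ, F x y) = 0 := by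
    have : ∀ x ∈ Gᶜ, (∫⁻ y in Gᶜ, F x y) = 0 := by
      intro x hx
      have : ∀ y ∈ Gᶜ, F x y = 0 := by
        intro y hy
        rw [hFdef]
        simp only [hEu, indicator_of_notMem (notMem_of_mem_compl hx),
          indicator_of_notMem (notMem_of_mem_compl hy), sub_zero, abs_zero]
        rw [Real.zero_rpow (by linarith : p ≠ 0)]
        simp
      calc (∫⁻ y in Gᶜ, F x y) = ∫⁻ y in Gᶜ, 0 :=
            setLIntegral_congr_fun hMG.compl this
        _ = 0 := lintegral_zero
    calc (∫⁻ x in Gᶜ, ∫⁻ y in Gᶜ, F x y) = ∫⁻ x in Gᶜ, 0 :=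
          setLIntegral_congr_fun hMG.compl this
      _ = 0 := lintegral_zero
  -- measurability of partial integrals
  have hmA : Measurable fun x => ∫⁻ y in G, F x y := Measurable.lintegral_prod_right' hF
  have hmB : Measurable fun x => ∫⁻ y in Gᶜ, F x y := Measurable.lintegral_prod_right' hF
  -- assemble
  have hsplit : gagliardoP n s p Set.univ Eu =
      ((∫⁻ x in G, ∫⁻ y in G, F x y) + ∫⁻ x in G, ∫⁻ y in Gᶜ, F x y) +
      ((∫⁻ x in Gᶜ, ∫⁻ y in G, F x y) + ∫⁻ x in Gᶜ, ∫⁻ y in Gᶜ, F x y) := by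
    rw [gagliardoP]
    simp_rw [Measure.restrict_univ]
    have hinner : ∀ x : Euc n, (∫⁻ y, F x y) = (∫⁻ y in G, F x y) + ∫⁻ y in Gᶜ, F x y :=
      fun x => (lintegral_add_compl _ hMG).symm
    calc (∫⁻ x, ∫⁻ y, ENNReal.ofReal (|Eu x - Eu y| ^ p / dist x y ^ ((n:ℝ) + s * p)))
        = ∫⁻ x, ((∫⁻ y in G, F x y) + ∫⁻ y in Gᶜ, F x y) := lintegral_congr hinner
      _ = (∫⁻ x in G, ((∫⁻ y in G, F x y) + ∫⁻ y in Gᶜ, F x y)) +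
          ∫⁻ x in Gᶜ, ((∫⁻ y in G, F x y) + ∫⁻ y in Gᶜ, F x y) :=
          (lintegral_add_compl _ hMG).symm
      _ = _ := by
          rw [lintegral_add_left hmA, lintegral_add_left hmA]
  rw [hsplit, hT1, hT4, add_zero]
  have hbound : gagliardoP n s p G u + (∫⁻ x in G, ∫⁻ y in Gᶜ, F x y) +
      (∫⁻ x in Gᶜ, ∫⁻ y in G, F x y) ≤
      gagliardoP n s p G u + K * (ENNReal.ofReal c * gagliardoP n s p G u) +
        K * (ENNReal.ofReal c * gagliardoP n s p G u) := by
    gcongr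
  refine le_trans hbound ?_
  have hconst : ENNReal.ofReal (1 + 2 * (κ * c)) = 1 + 2 * (ENNReal.ofReal κ * ENNReal.ofReal c) := by
    rw [ENNReal.ofReal_add (by norm_num) (by positivity), ENNReal.ofReal_one,
      ENNReal.ofReal_mul (by norm_num), ← ENNReal.ofReal_mul hκ0]
    norm_num
  rw [hconst, hKeq]
  ring_nf
  exact le_refl _

end
end
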